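/- arXiv:1901.01796 — 7 statements merged into one kernel-verified Lean document; each statement's English description precedes it below -/
import Mathlib

section
/- Let m ≥ 2 and d = 2m. Let T ∈ S^d ℂ³ be a nonzero ternary form of degree d, and let A ⊆ ℙ²(ℂ) be a non-redundant finite set computing T, with r = ℓ(A). If h_A(m) = r and r ≤ binom(m+2,2), then A computes the rank of T, i.e. the rank of T equals r. -/
open MvPolynomial

noncomputable section

/-- Projective n-space over ℂ, viewed as classes of linear forms (vectors in ℂ^{n+1}). -/
abbrev Proj (n : ℕ) := Projectivization ℂ (Fin (n + 1) → ℂ)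

instance (n : ℕ) : DecidableEq (Proj n) := Classical.decEq _

/-- The linear form with coefficient vector `v`. -/
def linForm (n : ℕ) (v : Fin (n + 1) → ℂ) : MvPolynomial (Fin (n + 1)) ℂ :=
  ∑ i, MvPolynomial.C (v i) * MvPolynomial.X i

/-- The `d`-th Veronese image of a projective point: the `d`-th power of (a representative of)
the corresponding linear form. -/
def vero (n d : ℕ) (P : Proj n) : MvPolynomial (Fin (n + 1)) ℂ :=
  linForm n P.rep ^ d

/-- `A` computes `T` : the class of `T` lies in the projective linear span of `v_d(A)`,
equivalently `T` lies in the linear span of the `d`-th powers of the points of `A`. -/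
def Computes (n d : ℕ) (A : Finset (Proj n)) (T : MvPolynomial (Fin (n + 1)) ℂ) : Prop :=
  T ∈ Submodule.span ℂ (vero n d '' (A : Set (Proj n)))

/-- `A` is a non-redundant set computing `T`. -/
def NRComputes (n d : ℕ) (A : Finset (Proj n)) (T : MvPolynomial (Fin (n + 1)) ℂ) : Prop :=
  Computes n d A T ∧ ∀ A' ⊂ A, ¬ Computes n d A' T

/-- The (Waring) rank of `T` : minimal cardinality of a finite set computing `T`. -/
def waringRank (n d : ℕ) (T : MvPolynomial (Fin (n + 1)) ℂ) : ℕ :=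
  sInf {r | ∃ A : Finset (Proj n), A.card = r ∧ Computes n d A T}

/-- `T` is identifiable: there is exactly one finite set computing `T` whose
cardinality equals the rank of `T`. -/
def Identifiable (n d : ℕ) (T : MvPolynomial (Fin (n + 1)) ℂ) : Prop :=
  ∃! A : Finset (Proj n), A.card = waringRank n d T ∧ Computes n d A T

/-- The evaluation map of degree `j` on the chosen homogeneous coordinates of `Z`. -/
def evalMap (n j : ℕ) (Z : Finset (Proj n)) :
    MvPolynomial.homogeneousSubmodule (Fin (n + 1)) ℂ j →ₗ[ℂ] (Z → ℂ) where
  toFun F := fun P => MvPolynomial.eval (P.1).rep F.1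
  map_add' F G := by funext P; simp
  map_smul' c F := by funext P; simp

/-- The Hilbert function of the finite set `Z` (at a natural number `j`). -/
def hilbN (n : ℕ) (Z : Finset (Proj n)) (j : ℕ) : ℕ :=
  Module.finrank ℂ (LinearMap.range (evalMap n j Z))

/-- The Hilbert function of the finite set `Z` (zero in negative degrees). -/
def hilb (n : ℕ) (Z : Finset (Proj n)) (j : ℤ) : ℕ :=
  if j < 0 then 0 else hilbN n Z j.toNat

/-- The first difference of the Hilbert function. -/
def Dhilb (n : ℕ) (Z : Finset (Proj n)) (j : ℤ) : ℤ :=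
  (hilb n Z j : ℤ) - (hilb n Z (j - 1) : ℤ)

/-- The `d`-th Kruskal rank of `A` : the largest `k` such that every subset of `A`
with at most `k` elements has linearly independent image under `v_d`. -/
def kruskalRank (n d : ℕ) (A : Finset (Proj n)) : ℕ :=
  sSup {k | k ≤ A.card ∧
    ∀ A' ⊆ A, A'.card ≤ k → LinearIndependent ℂ (fun P : A' => vero n d P.1)}

/-- The Cayley–Bacharach property in degree `d` for the finite set `Z`. -/
def CB (n d : ℕ) (Z : Finset (Proj n)) : Prop :=
  ∀ P ∈ Z, ∀ F : MvPolynomial (Fin (n + 1)) ℂ, F.IsHomogeneous d →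
    (∀ Q ∈ Z, Q ≠ P → MvPolynomial.eval Q.rep F = 0) → MvPolynomial.eval P.rep F = 0

end


noncomputable section Aux

open Finset in
private lemma vero_key (v : Fin 3 → ℂ) (k : Fin 3 → ℕ) :
    ((Nat.multinomial Finset.univ k : MvPolynomial (Fin 3) ℂ) * ∏ i, (C (v i) * X i) ^ k i)
      = monomial (Finsupp.equivFunOnFinite.symm k)
          ((Nat.multinomial Finset.univ k : ℂ) * ∏ i, v i ^ k i) := by
  have h1 : ∀ i, (C (v i) * X i) ^ k i = C (v i ^ k i) * X i ^ k i := by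
    intro i; rw [mul_pow, C_pow]
  simp_rw [h1]
  rw [Finset.prod_mul_distrib, ← map_prod (C : ℂ →+* MvPolynomial (Fin 3) ℂ) _ Finset.univ]
  set κ : Fin 3 →₀ ℕ := Finsupp.equivFunOnFinite.symm k with hκ
  have h2 : (∏ x : Fin 3, X x ^ k x : MvPolynomial (Fin 3) ℂ) = monomial κ 1 := by
    rw [← prod_X_pow_eq_monomial, ← Finset.prod_subset (Finset.subset_univ κ.support)
      (fun i _ hi => by rw [Finsupp.notMem_support_iff] at hi
                        rw [show k i = κ i from rfl, hi, pow_zero])]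
    rfl
  rw [h2, show ((Nat.multinomial Finset.univ k : MvPolynomial (Fin 3) ℂ))
      = C (Nat.multinomial Finset.univ k : ℂ) by simp,
    ← mul_assoc, ← C_mul, C_mul_monomial, mul_one]

private lemma coeff_linForm_pow (v : Fin 3 → ℂ) (d : ℕ) (α : Fin 3 →₀ ℕ)
    (hα : (∑ i, α i) = d) :
    coeff α (linForm 2 v ^ d) = (Nat.multinomial Finset.univ ⇑α : ℂ) * ∏ i, v i ^ α i := by
  classical
  rw [show linForm 2 v = ∑ i, C (v i) * X i from rfl,
    Finset.sum_pow_eq_sum_piAntidiag, coeff_sum]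
  rw [Finset.sum_congr rfl (fun k _ => by rw [vero_key])]
  simp_rw [coeff_monomial]
  have hmem : ⇑α ∈ Finset.piAntidiag Finset.univ d := by
    rw [Finset.mem_piAntidiag]; exact ⟨hα, fun i _ => Finset.mem_univ i⟩
  rw [Finset.sum_eq_single (⇑α)]
  · rw [if_pos]; exact Finsupp.equivFunOnFinite.symm_apply_eq.mpr rfl
  · intro k _ hk
    rw [if_neg]
    intro h
    exact hk (Finsupp.equivFunOnFinite.symm_apply_eq.mp h)
  · intro h; exact absurd hmem h

/-- The apolarity functional attached to a form `F`. -/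
private def apol (F : MvPolynomial (Fin 3) ℂ) : MvPolynomial (Fin 3) ℂ →ₗ[ℂ] ℂ where
  toFun G := ∑ α ∈ F.support, coeff α F * (∏ i, ((α i).factorial : ℂ)) * coeff α G
  map_add' G H := by simp [coeff_add, mul_add, Finset.sum_add_distrib]
  map_smul' c G := by
    simp only [coeff_smul, smul_eq_mul, RingHom.id_apply]
    rw [Finset.mul_sum]
    exact Finset.sum_congr rfl fun α _ => by ring

private lemma homog_support_sum {F : MvPolynomial (Fin 3) ℂ} {d : ℕ} (hF : F.IsHomogeneous d)
    {α : Fin 3 →₀ ℕ} (hα : α ∈ F.support) : ∑ i, α i = d := by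
  have := hF (MvPolynomial.mem_support_iff.mp hα)
  simpa [Finsupp.weight_apply, Finsupp.sum_fintype] using this

private lemma apol_pow (F : MvPolynomial (Fin 3) ℂ) {d : ℕ} (hF : F.IsHomogeneous d)
    (v : Fin 3 → ℂ) :
    apol F (linForm 2 v ^ d) = (d.factorial : ℂ) * eval v F := by
  have h : ∀ α ∈ F.support,
      coeff α F * (∏ i, ((α i).factorial : ℂ)) * coeff α (linForm 2 v ^ d)
      = (d.factorial : ℂ) * (coeff α F * ∏ i, v i ^ α i) := by
    intro α hα
    rw [coeff_linForm_pow v d α (homog_support_sum hF hα)]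
    have hs : (∏ i, ((α i).factorial : ℂ)) * (Nat.multinomial Finset.univ ⇑α : ℂ)
        = (d.factorial : ℂ) := by
      rw [← Nat.cast_prod, ← Nat.cast_mul, Nat.multinomial_spec, homog_support_sum hF hα]
    calc coeff α F * (∏ i, ((α i).factorial : ℂ))
          * ((Nat.multinomial Finset.univ ⇑α : ℂ) * ∏ i, v i ^ α i)
        = ((∏ i, ((α i).factorial : ℂ)) * (Nat.multinomial Finset.univ ⇑α : ℂ))
          * (coeff α F * ∏ i, v i ^ α i) := by ring
      _ = _ := by rw [hs]
  rw [show apol F (linForm 2 v ^ d)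
      = ∑ α ∈ F.support, coeff α F * (∏ i, ((α i).factorial : ℂ)) * coeff α (linForm 2 v ^ d)
      from rfl,
    Finset.sum_congr rfl h, ← Finset.mul_sum, eval_eq']

private lemma apol_vero (F : MvPolynomial (Fin 3) ℂ) {d : ℕ} (hF : F.IsHomogeneous d)
    (P : Proj 2) : apol F (vero 2 d P) = (d.factorial : ℂ) * eval P.rep F :=
  apol_pow F hF P.rep

/-- A representation of an element of the span as a finite combination. -/
private lemma computes_repr {d : ℕ} {B : Finset (Proj 2)} {T : MvPolynomial (Fin 3) ℂ}
    (h : Computes 2 d B T) : ∃ c : ↥B → ℂ, ∑ Q : ↥B, c Q • vero 2 d Q.1 = T := by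
  have h' := h
  rw [Computes, Set.image_eq_range (vero 2 d) (B : Set (Proj 2))] at h'
  exact (Submodule.mem_span_range_iff_exists_fun ℂ).mp h'

end Aux

set_option synthInstance.maxHeartbeats 1000000 in
/-- Theorem (even case, rank): if `d = 2m`, `m ≥ 2`, `h_A(m) = r` and
`r ≤ binom(m+2,2)`, then `A` computes the rank of `T`, i.e. the rank of `T` is `r`. -/
theorem stmt2 (m : ℕ) (hm : 2 ≤ m) (d : ℕ) (hd : d = 2 * m)
    (T : MvPolynomial (Fin 3) ℂ) (hT0 : T ≠ 0) (hTh : T.IsHomogeneous d)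
    (A : Finset (Proj 2)) (hA : NRComputes 2 d A T) (r : ℕ) (hr : r = A.card)
    (hh : hilbN 2 A m = r)
    (hrb : r ≤ Nat.choose (m + 2) 2) :
    waringRank 2 d T = r := by
  classical
  have hrS : r ∈ {s | ∃ B : Finset (Proj 2), B.card = s ∧ Computes 2 d B T} :=
    ⟨A, hr.symm, hA.1⟩
  have hle : waringRank 2 d T ≤ r := Nat.sInf_le hrS
  by_contra hne'
  have hlt : waringRank 2 d T < r := lt_of_le_of_ne hle hne'
  obtain ⟨B, hBcard, hBcomp⟩ :
      ∃ B : Finset (Proj 2), B.card = waringRank 2 d T ∧ Computes 2 d B T :=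
    Nat.sInf_mem (⟨r, hrS⟩ : Set.Nonempty _)
  have hBlt : B.card < r := hBcard ▸ hlt
  -- representations of T
  obtain ⟨a, ha⟩ := computes_repr hA.1
  obtain ⟨b, hb⟩ := computes_repr hBcomp
  -- all coefficients over A are nonzero
  have hanz : ∀ P : ↥A, a P ≠ 0 := by
    intro P hP0
    apply hA.2 (A.erase P.1) (Finset.erase_ssubset P.2)
    rw [Computes, ← ha]
    apply Submodule.sum_mem
    intro Q _
    by_cases hQ : Q = P
    · rw [hQ, hP0, zero_smul]; exact Submodule.zero_mem _
    · refine Submodule.smul_mem _ _ (Submodule.subset_span ⟨Q.1, ?_, rfl⟩)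
      exact Finset.mem_coe.mpr (Finset.mem_erase.mpr ⟨fun h => hQ (Subtype.ext h), Q.2⟩)
  -- the degree-m evaluation map on A is surjective
  have hfr : Module.finrank ℂ (LinearMap.range (evalMap 2 m A)) = Module.finrank ℂ (↥A → ℂ) := by
    rw [Module.finrank_pi, Fintype.card_coe]
    exact hh.trans hr
  have htop : LinearMap.range (evalMap 2 m A) = ⊤ := Submodule.eq_top_of_finrank_eq hfr
  -- existence of a point of A and a degree-m form vanishing on B but not at that point
  have hPH : ∃ P₀ : ↥A, ∃ H : MvPolynomial (Fin 3) ℂ, H.IsHomogeneous m ∧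
      (∀ Q : ↥B, MvPolynomial.eval Q.1.rep H = 0) ∧ MvPolynomial.eval P₀.1.rep H ≠ 0 := by
    by_contra hcon
    push_neg at hcon
    set Z : Finset (Proj 2) := A ∪ B with hZ
    set πB : (↥Z → ℂ) →ₗ[ℂ] (↥B → ℂ) :=
      LinearMap.funLeft ℂ ℂ (fun Q : ↥B => (⟨Q.1, Finset.mem_union_right A Q.2⟩ : ↥Z)) with hπB
    set πA : (↥Z → ℂ) →ₗ[ℂ] (↥A → ℂ) :=
      LinearMap.funLeft ℂ ℂ (fun P : ↥A => (⟨P.1, Finset.mem_union_left B P.2⟩ : ↥Z)) with hπA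
    have hcompA : evalMap 2 m A = πA.comp (evalMap 2 m Z) := rfl
    have h1 : r ≤ Module.finrank ℂ (LinearMap.range (evalMap 2 m Z)) := by
      calc r = Module.finrank ℂ (LinearMap.range (evalMap 2 m A)) := hh.symm
        _ = Module.finrank ℂ ((LinearMap.range (evalMap 2 m Z)).map πA) := by
              rw [hcompA, LinearMap.range_comp]
        _ ≤ _ := Submodule.finrank_map_le _ _
    have hinj : Function.Injective
        (πB.comp (LinearMap.range (evalMap 2 m Z)).subtype) := by
      refine (injective_iff_map_eq_zero _).mpr ?_
      intro x hx0
      obtain ⟨F, hF⟩ := x.2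
      have hBzero : ∀ Q : ↥B, MvPolynomial.eval Q.1.rep F.1 = 0 := by
        intro Q
        have := congrFun hx0 Q
        rw [LinearMap.comp_apply, Submodule.subtype_apply, ← hF] at this; exact this
      have hAzero : ∀ P : ↥A, MvPolynomial.eval P.1.rep F.1 = 0 := fun P =>
        hcon P F.1 ((MvPolynomial.mem_homogeneousSubmodule m F.1).mp F.2) hBzero
      apply Subtype.ext
      rw [show (((0 : ↥(LinearMap.range (evalMap 2 m Z))) : ↥Z → ℂ)) = 0 from rfl, ← hF]
      funext R
      rcases Finset.mem_union.mp R.2 with h | h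
      · exact hAzero ⟨R.1, h⟩
      · exact hBzero ⟨R.1, h⟩
    have h2 : Module.finrank ℂ (LinearMap.range (evalMap 2 m Z)) ≤ B.card := by
      have := LinearMap.finrank_le_finrank_of_injective hinj
      rwa [Module.finrank_pi, Fintype.card_coe] at this
    omega
  obtain ⟨P₀, H, hHhom, hHB, hHP⟩ := hPH
  -- the separator of P₀ inside A, in degree m
  obtain ⟨G, hG⟩ : ∃ G, evalMap 2 m A G = fun P : ↥A => if P = P₀ then (1 : ℂ) else 0 := by
    have : (fun P : ↥A => if P = P₀ then (1 : ℂ) else 0) ∈ LinearMap.range (evalMap 2 m A) := by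
      rw [htop]; exact Submodule.mem_top
    exact this
  have hGP₀ : MvPolynomial.eval P₀.1.rep G.1 = 1 := by
    have := congrFun hG P₀; simpa [evalMap] using this
  have hGP : ∀ P : ↥A, P ≠ P₀ → MvPolynomial.eval P.1.rep G.1 = 0 := by
    intro P hP
    have := congrFun hG P; simpa [evalMap, hP] using this
  -- the degree-d form separating P₀ from A ∪ B
  set Fb : MvPolynomial (Fin 3) ℂ := G.1 * H with hFb
  have hFbhom : Fb.IsHomogeneous d := by
    rw [hd, two_mul]
    exact ((MvPolynomial.mem_homogeneousSubmodule m G.1).mp G.2).mul hHhom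
  -- apply the apolarity functional
  have hTB : apol Fb T = 0 := by
    rw [← hb, map_sum]
    refine Finset.sum_eq_zero fun Q _ => ?_
    rw [LinearMap.map_smul, apol_vero Fb hFbhom, hFb, map_mul, hHB Q,
      mul_zero, mul_zero, smul_zero]
  have hTA : apol Fb T = a P₀ * ((d.factorial : ℂ) * MvPolynomial.eval P₀.1.rep Fb) := by
    rw [← ha, map_sum]
    rw [Finset.sum_eq_single P₀]
    · rw [LinearMap.map_smul, apol_vero Fb hFbhom, smul_eq_mul]
    · intro P _ hP
      rw [LinearMap.map_smul, apol_vero Fb hFbhom, hFb, map_mul, hGP P hP,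
        zero_mul, mul_zero, smul_zero]
    · intro h; exact absurd (Finset.mem_univ P₀) h
  rw [hTB] at hTA
  have : a P₀ * ((d.factorial : ℂ) * MvPolynomial.eval P₀.1.rep Fb) ≠ 0 := by
    apply mul_ne_zero (hanz P₀)
    apply mul_ne_zero (Nat.cast_ne_zero.mpr d.factorial_ne_zero)
    rw [hFb, map_mul, hGP₀, one_mul]
    exact hHP
  exact this hTA.symm
end

section
/- Let Z ⊆ ℙⁿ(ℂ) be a finite set satisfying the Cayley–Bacharach property CB(d). Then for every proper subset Z' ⊊ Z one has h¹_{Z'}(d) < h¹_Z(d). -/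
open MvPolynomial

/-!
Removing a point `P` from `Z` lowers the Hilbert function in degree `d` exactly when some form of
degree `d` vanishes on `Z ∖ {P}` but not at `P`; `CB(d)` rules this out, so
`h¹_{Z ∖ {P}}(d) = h¹_Z(d) - 1`. Shrinking further cannot raise `h¹`: restricting functions on `Z`
to `Z'` has a kernel of dimension `|Z| - |Z'|`, so the Hilbert function drops by at most that much.
-/

section FiniteRank

open Module LinearMap

variable {K M N P : Type*} [Field K] [AddCommGroup M] [Module K M] [AddCommGroup N] [Module K N]
  [AddCommGroup P] [Module K P]

theorem LinearMap.finrank_range_le_finrank_range_comp_add_finrank_ker [FiniteDimensional K N]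
    (f : M →ₗ[K] N) (g : N →ₗ[K] P) :
    finrank K (range f) ≤ finrank K (range (g ∘ₗ f)) + finrank K (ker g) := by
  have hrank := (g.domRestrict (range f)).finrank_range_add_finrank_ker
  rw [range_domRestrict, ← range_comp] at hrank
  have hker : finrank K (ker (g.domRestrict (range f))) ≤ finrank K (ker g) := by
    rw [ker_domRestrict]
    exact (Submodule.finrank_map_subtype_eq _ _).symm.trans_le
      (Submodule.finrank_mono (Submodule.map_comap_le _ _))
  omega

theorem LinearMap.finrank_range_eq_of_ker_eq (f : M →ₗ[K] N) (g : M →ₗ[K] P) (h : ker f = ker g) :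
    finrank K (range f) = finrank K (range g) :=
  (f.quotKerEquivRange.symm.trans ((Submodule.quotEquivOfEq _ _ h).trans
    g.quotKerEquivRange)).finrank_eq

theorem LinearMap.finrank_ker_funLeft_add_card {α β : Type*} [Fintype α] [Fintype β]
    {i : α → β} (hi : Function.Injective i) :
    finrank K (ker (funLeft K K i)) + Fintype.card α = Fintype.card β := by
  have hrank := (funLeft K K i).finrank_range_add_finrank_ker
  rw [range_eq_top.2 (funLeft_surjective_of_injective K K i hi), finrank_top] at hrank
  simp only [finrank_fintype_fun_eq_card] at hrank
  omega

end FiniteRank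

section HilbertFunction

open Module

variable {n : ℕ} {Z Z' : Finset (Proj n)}

theorem evalMap_eq_funLeft_comp (j : ℕ) (h : Z' ⊆ Z) :
    evalMap n j Z' = LinearMap.funLeft ℂ ℂ (Subtype.map id h) ∘ₗ evalMap n j Z :=
  rfl

theorem hilbN_add_card_le_of_subset (j : ℕ) (h : Z' ⊆ Z) :
    hilbN n Z j + Z'.card ≤ hilbN n Z' j + Z.card := by
  have hrange : hilbN n Z j ≤
      hilbN n Z' j + finrank ℂ (LinearMap.ker (LinearMap.funLeft ℂ ℂ (Subtype.map id h))) := by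
    unfold hilbN
    rw [evalMap_eq_funLeft_comp j h]
    exact (evalMap n j Z).finrank_range_le_finrank_range_comp_add_finrank_ker _
  have hker : finrank ℂ (LinearMap.ker (LinearMap.funLeft ℂ ℂ (Subtype.map id h))) +
      Z'.card = Z.card := by
    simpa using LinearMap.finrank_ker_funLeft_add_card (K := ℂ) (i := Subtype.map id h)
      (Subtype.map_injective h Function.injective_id)
  omega

theorem CB.hilbN_erase {d : ℕ} (hCB : CB n d Z) {P : Proj n} (hP : P ∈ Z) :
    hilbN n (Z.erase P) d = hilbN n Z d := by
  refine LinearMap.finrank_range_eq_of_ker_eq _ _ (le_antisymm ?_ ?_)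
  · intro F hF
    ext ⟨Q, hQ⟩
    by_cases hQP : Q = P
    · subst hQP
      exact hCB Q hQ F.1 F.2 fun R hR hRQ => congrFun hF ⟨R, Finset.mem_erase.2 ⟨hRQ, hR⟩⟩
    · exact congrFun hF ⟨Q, Finset.mem_erase.2 ⟨hQP, hQ⟩⟩
  · rw [evalMap_eq_funLeft_comp d (Z.erase_subset P)]
    exact LinearMap.ker_le_ker_comp _ _

end HilbertFunction

/-- Proposition: if `Z` satisfies `CB(d)`, then every proper subset `Z' ⊊ Z`
has `h¹_{Z'}(d) < h¹_Z(d)`. -/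
theorem stmt6 (n d : ℕ) (Z : Finset (Proj n)) (hCB : CB n d Z)
    (Z' : Finset (Proj n)) (hZ' : Z' ⊂ Z) :
    ((Z'.card : ℤ) - (hilbN n Z' d : ℤ)) < ((Z.card : ℤ) - (hilbN n Z d : ℤ)) := by
  obtain ⟨P, hPZ, hPZ'⟩ := Finset.exists_of_ssubset hZ'
  have hsub : Z' ⊆ Z.erase P := Finset.subset_erase.2 ⟨hZ'.subset, hPZ'⟩
  have hmono := hilbN_add_card_le_of_subset d hsub
  have herase := hCB.hilbN_erase hPZ
  have hcard := Finset.card_erase_add_one hPZ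
  omega
end

section
/- Let T ∈ S^d ℂ^{n+1} be a nonzero form of degree d, let A ⊆ ℙⁿ(ℂ) be a non-redundant finite set computing T with r = ℓ(A), and let B ⊆ ℙⁿ(ℂ), B ≠ A, be another non-redundant finite set computing T with ℓ(B) ≤ r and A ∩ B ≠ ∅. Then there exist a nonzero form T₀ ∈ S^d ℂ^{n+1} and non-redundant finite sets A', B' ⊆ ℙⁿ(ℂ), both computing T₀, such that A' ⊆ A, B' ⊆ B ∖ A, A' ∩ B' = ∅, ℓ(B') ≤ ℓ(A'), and ℓ(B') < r. -/
open MvPolynomial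

lemma computes_mono {n d : ℕ} {S S' : Finset (Proj n)} {U : MvPolynomial (Fin (n + 1)) ℂ}
    (h : S ⊆ S') (hc : Computes n d S U) : Computes n d S' U :=
  Submodule.span_mono (Set.image_mono (Finset.coe_subset.mpr h)) hc

lemma exists_nr (n d : ℕ) (T₀ : MvPolynomial (Fin (n + 1)) ℂ) :
    ∀ S : Finset (Proj n), Computes n d S T₀ → ∃ S' ⊆ S, NRComputes n d S' T₀ := by
  intro S
  induction S using Finset.strongInduction with
  | _ S ih =>
    intro hS
    by_cases h : ∀ S'' ⊂ S, ¬ Computes n d S'' T₀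
    · exact ⟨S, subset_rfl, hS, h⟩
    · push_neg at h
      obtain ⟨S'', hss, hc⟩ := h
      obtain ⟨S', hsub, hnr⟩ := ih S'' hss hc
      exact ⟨S', hsub.trans hss.subset, hnr⟩

/-- Remark (reduction to the disjoint case): if `B ≠ A` is another non-redundant
decomposition of `T` with `ℓ(B) ≤ r = ℓ(A)` and `A ∩ B ≠ ∅`, then there are a nonzero
form `T₀` and disjoint non-redundant decompositions `A' ⊆ A`, `B' ⊆ B \ A` of `T₀`
with `ℓ(B') ≤ ℓ(A')` and `ℓ(B') < r`. -/
theorem stmt8 (n d : ℕ)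
    (T : MvPolynomial (Fin (n + 1)) ℂ) (hT0 : T ≠ 0) (hTh : T.IsHomogeneous d)
    (A B : Finset (Proj n)) (hA : NRComputes n d A T) (hB : NRComputes n d B T)
    (hBA : B ≠ A) (hcard : B.card ≤ A.card) (hint : (A ∩ B).Nonempty) :
    ∃ (T₀ : MvPolynomial (Fin (n + 1)) ℂ) (A' B' : Finset (Proj n)),
      T₀ ≠ 0 ∧ NRComputes n d A' T₀ ∧ NRComputes n d B' T₀ ∧
      A' ⊆ A ∧ B' ⊆ B \ A ∧ A' ∩ B' = ∅ ∧ B'.card ≤ A'.card ∧ B'.card < A.card := by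
  classical
  obtain ⟨b, hbsupp, hbT⟩ := (Finsupp.mem_span_image_iff_linearCombination ℂ).mp hB.1
  set bC := b.filter (fun P => P ∈ A) with hbCdef
  set bD := b.filter (fun P => P ∉ A) with hbDdef
  have hsplit : Finsupp.linearCombination ℂ (vero n d) bC
      + Finsupp.linearCombination ℂ (vero n d) bD = T := by
    rw [← map_add, hbCdef, hbDdef, Finsupp.filter_pos_add_filter_neg, hbT]
  set T₀ := Finsupp.linearCombination ℂ (vero n d) bD with hT₀def
  have hbsupp' : ∀ x ∈ b.support, x ∈ B := by
    intro x hx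
    exact_mod_cast hbsupp hx
  have hCsupp : ↑bC.support ⊆ ((A ∩ B : Finset (Proj n)) : Set (Proj n)) := by
    intro x hx
    simp only [hbCdef, Finsupp.support_filter, Finset.coe_filter, Set.mem_setOf_eq] at hx
    simp only [Finset.coe_inter, Set.mem_inter_iff, Finset.mem_coe]
    exact ⟨hx.2, hbsupp' x hx.1⟩
  have hDsupp : ↑bD.support ⊆ ((B \ A : Finset (Proj n)) : Set (Proj n)) := by
    intro x hx
    simp only [hbDdef, Finsupp.support_filter, Finset.coe_filter, Set.mem_setOf_eq] at hx
    simp only [Finset.coe_sdiff, Set.mem_diff, Finset.mem_coe]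
    exact ⟨hbsupp' x hx.1, hx.2⟩
  have hTC : Finsupp.linearCombination ℂ (vero n d) bC
      ∈ Submodule.span ℂ (vero n d '' ((A ∩ B : Finset (Proj n)) : Set (Proj n))) :=
    (Finsupp.mem_span_image_iff_linearCombination ℂ).mpr ⟨bC, hCsupp, rfl⟩
  have hT₀B : Computes n d (B \ A) T₀ :=
    (Finsupp.mem_span_image_iff_linearCombination ℂ).mpr ⟨bD, hDsupp, rfl⟩
  have hT₀A : Computes n d A T₀ := by
    have hEq : T₀ = T - Finsupp.linearCombination ℂ (vero n d) bC := by
      rw [← hsplit]; ring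
    rw [Computes, hEq]
    exact Submodule.sub_mem _ hA.1
      (computes_mono (Finset.inter_subset_left) hTC)
  have hT₀ne : T₀ ≠ 0 := by
    intro h0
    have hTC' : Computes n d (A ∩ B) T := by
      have hEq : T = Finsupp.linearCombination ℂ (vero n d) bC := by
        rw [← hsplit, h0, add_zero]
      rw [Computes, hEq]; exact hTC
    by_cases hAB : A ∩ B = B
    · have hBsubA : B ⊆ A := fun x hx => Finset.mem_of_mem_inter_left (hAB ▸ hx)
      exact hA.2 B (hBsubA.ssubset_of_ne hBA) hB.1
    · exact hB.2 (A ∩ B) ((Finset.inter_subset_right).ssubset_of_ne hAB) hTC'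
  obtain ⟨A', hA'A, hA'⟩ := exists_nr n d T₀ A hT₀A
  obtain ⟨B', hB'BA, hB'⟩ := exists_nr n d T₀ (B \ A) hT₀B
  have hAeq : A' ∪ (A ∩ B) = A := by
    have hsub : A' ∪ (A ∩ B) ⊆ A := Finset.union_subset hA'A Finset.inter_subset_left
    by_contra hne
    apply hA.2 (A' ∪ (A ∩ B)) (hsub.ssubset_of_ne hne)
    have h1 : Computes n d (A' ∪ (A ∩ B)) T₀ :=
      computes_mono Finset.subset_union_left hA'.1
    have h2 : Finsupp.linearCombination ℂ (vero n d) bC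
        ∈ Submodule.span ℂ (vero n d '' ((A' ∪ (A ∩ B) : Finset (Proj n)) : Set (Proj n))) :=
      computes_mono Finset.subset_union_right hTC
    have hEq : T = T₀ + Finsupp.linearCombination ℂ (vero n d) bC := by
      rw [← hsplit]; ring
    rw [Computes, hEq]
    exact Submodule.add_mem _ h1 h2
  have hcardA : A.card ≤ A'.card + (A ∩ B).card := by
    calc A.card = (A' ∪ (A ∩ B)).card := by rw [hAeq]
    _ ≤ A'.card + (A ∩ B).card := Finset.card_union_le _ _
  have hcardBA : (B \ A).card + (B ∩ A).card = B.card := Finset.card_sdiff_add_card_inter B A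
  have hinterc : (A ∩ B).card = (B ∩ A).card := by rw [Finset.inter_comm]
  have hintpos : 0 < (A ∩ B).card := Finset.card_pos.mpr hint
  have hB'card : B'.card ≤ (B \ A).card := Finset.card_le_card hB'BA
  refine ⟨T₀, A', B', hT₀ne, hA', hB', hA'A, hB'BA, ?_, by omega, by omega⟩
  ext x
  simp only [Finset.mem_inter, Finset.notMem_empty, iff_false, not_and]
  intro hxA' hxB'
  exact (Finset.mem_sdiff.mp (hB'BA hxB')).2 (hA'A hxA')
end

section
/- For every integer m ≥ 2, setting d = 2m and r = binom(m+2,2) − 1, there exist a nonzero ternary form T ∈ S^d ℂ³ and finite sets A, B ⊆ ℙ²(ℂ) with A ∩ B = ∅ and ℓ(A) = ℓ(B) = r, such that both A and B are non-redundant sets computing T. (In particular the bound r ≤ binom(m+2,2) − 2 in the identifiability criterion for even-degree ternary forms is sharp.) -/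
open MvPolynomial

noncomputable section
namespace Stmt12Aux
open Finset
section UniBiv
open Polynomial


/-- Lagrange leading weights. -/
def wgt {n : ℕ} (v : Fin n → ℂ) (i : Fin n) : ℂ :=
  ∏ k ∈ Finset.univ.erase i, (v i - v k)⁻¹

variable {n : ℕ} {v : Fin n → ℂ}

lemma wgt_ne_zero (hv : Function.Injective v) (i : Fin n) : wgt v i ≠ 0 := by
  refine Finset.prod_ne_zero_iff.2 fun k hk => ?_
  have : k ≠ i := (Finset.mem_erase.1 hk).1
  exact inv_ne_zero (sub_ne_zero.2 fun h => this (hv h.symm))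

lemma coeff_basis_top (hv : Function.Injective v) (i : Fin n) :
    (Lagrange.basis Finset.univ v i).coeff (n - 1) = wgt v i := by
  have hinj : Set.InjOn v (Finset.univ : Finset (Fin n)) := fun a _ b _ h => hv h
  have hdeg : (Lagrange.basis Finset.univ v i).natDegree = n - 1 := by
    simpa using Lagrange.natDegree_basis hinj (Finset.mem_univ i)
  rw [← hdeg, ← Polynomial.leadingCoeff]
  unfold Lagrange.basis
  rw [Polynomial.leadingCoeff_prod]
  refine Finset.prod_congr rfl fun k hk => ?_
  have hne : v i ≠ v k := fun h => (Finset.mem_erase.1 hk).1 (hv h.symm)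
  rw [Lagrange.basisDivisor, Polynomial.leadingCoeff_mul, Polynomial.leadingCoeff_C,
    Polynomial.leadingCoeff_X_sub_C, mul_one]

lemma sum_wgt_pow (hv : Function.Injective v) {α : ℕ} (hα : α + 2 ≤ n) :
    ∑ i, wgt v i * (v i) ^ α = 0 := by
  have hinj : Set.InjOn v (Finset.univ : Finset (Fin n)) := fun a _ b _ h => hv h
  have hcard : (Finset.univ : Finset (Fin n)).card = n := by simp
  have hdlt : ((X : ℂ[X]) ^ α).degree < (Finset.univ : Finset (Fin n)).card := by
    rw [hcard, Polynomial.degree_X_pow]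
    exact_mod_cast Nat.lt_of_lt_of_le (Nat.lt_succ_of_lt (Nat.lt_succ_self _)) hα
  have h := Lagrange.eq_interpolate hinj hdlt
  have h2 := congrArg (fun p => Polynomial.coeff p (n - 1)) h
  simp only [Lagrange.interpolate_apply, Polynomial.finset_sum_coeff,
    Polynomial.coeff_smul, Polynomial.coeff_X_pow] at h2
  have hne : ¬ (n - 1 = α) := by omega
  rw [if_neg hne] at h2
  rw [h2]
  refine Finset.sum_congr rfl fun i _ => ?_
  rw [Polynomial.coeff_C_mul, Polynomial.eval_pow, Polynomial.eval_X, coeff_basis_top hv,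
    mul_comm]



variable {n : ℕ} {v : Fin n → ℂ}

lemma eval_basis_delta (hv : Function.Injective v) (i k : Fin n) :
    Polynomial.eval (v k) (Lagrange.basis Finset.univ v i) = if k = i then 1 else 0 := by
  by_cases h : k = i
  · subst h
    rw [if_pos rfl]
    exact Lagrange.eval_basis_self (fun a _ b _ hab => hv hab) (Finset.mem_univ k)
  · rw [if_neg h]
    exact Lagrange.eval_basis_of_ne (fun he => h he.symm) (Finset.mem_univ k)

lemma eval_basis_expand (hv : Function.Injective v) (hn : 1 ≤ n) (i k : Fin n) :
    Polynomial.eval (v k) (Lagrange.basis Finset.univ v i)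
      = ∑ α ∈ Finset.range n, (Lagrange.basis Finset.univ v i).coeff α * (v k) ^ α := by
  apply Polynomial.eval_eq_sum_range'
  have : (Lagrange.basis Finset.univ v i).natDegree = n - 1 := by
    simpa using Lagrange.natDegree_basis (fun a _ b _ hab => hv hab) (Finset.mem_univ i)
  omega

variable {m : ℕ} {v₁ : Fin m → ℂ} {v₂ : Fin (m + 3) → ℂ}

lemma prop_of_moments (hv₁ : Function.Injective v₁) (hv₂ : Function.Injective v₂)
    (hm : 1 ≤ m) (d : Fin m × Fin (m + 3) → ℂ)
    (hmom : ∀ α β : ℕ, α + β ≤ 2 * m →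
      ∑ p : Fin m × Fin (m + 3), d p * v₁ p.1 ^ α * v₂ p.2 ^ β = 0) (p : Fin m × Fin (m + 3)) :
    d p = (∑ q : Fin m × Fin (m + 3), d q * v₁ q.1 ^ (m - 1) * v₂ q.2 ^ (m + 2))
        * (wgt v₁ p.1 * wgt v₂ p.2) := by
  obtain ⟨i₀, j₀⟩ := p
  set ℓ₁ := Lagrange.basis Finset.univ v₁ i₀ with hℓ₁
  set ℓ₂ := Lagrange.basis Finset.univ v₂ j₀ with hℓ₂
  have key : ∑ q : Fin m × Fin (m + 3),
      d q * Polynomial.eval (v₁ q.1) ℓ₁ * Polynomial.eval (v₂ q.2) ℓ₂ = d (i₀, j₀) := by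
    rw [Finset.sum_eq_single (i₀, j₀)]
    · rw [eval_basis_delta hv₁, eval_basis_delta hv₂, if_pos rfl, if_pos rfl]; ring
    · intro q _ hq
      rw [eval_basis_delta hv₁, eval_basis_delta hv₂]
      by_cases h1 : q.1 = i₀
      · have h2 : q.2 ≠ j₀ := fun h2 => hq (Prod.ext h1 h2)
        rw [if_neg h2]; ring
      · rw [if_neg h1]; ring
    · intro h; exact absurd (Finset.mem_univ _) h
  rw [← key]
  have expand : ∀ q : Fin m × Fin (m + 3),
      d q * Polynomial.eval (v₁ q.1) ℓ₁ * Polynomial.eval (v₂ q.2) ℓ₂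
      = ∑ α ∈ Finset.range m, ∑ β ∈ Finset.range (m + 3),
          (ℓ₁.coeff α * ℓ₂.coeff β) * (d q * v₁ q.1 ^ α * v₂ q.2 ^ β) := by
    intro q
    rw [eval_basis_expand hv₁ hm, eval_basis_expand hv₂ (by omega), mul_assoc,
      Finset.sum_mul_sum]
    simp_rw [Finset.mul_sum]
    refine Finset.sum_congr rfl fun α _ => ?_
    exact Finset.sum_congr rfl fun β _ => by ring
  calc ∑ q : Fin m × Fin (m + 3),
      d q * Polynomial.eval (v₁ q.1) ℓ₁ * Polynomial.eval (v₂ q.2) ℓ₂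
      = ∑ α ∈ Finset.range m, ∑ β ∈ Finset.range (m + 3), (ℓ₁.coeff α * ℓ₂.coeff β)
          * (∑ q : Fin m × Fin (m + 3), d q * v₁ q.1 ^ α * v₂ q.2 ^ β) := by
        simp_rw [expand]
        rw [Finset.sum_comm]
        refine Finset.sum_congr rfl fun α _ => ?_
        rw [Finset.sum_comm]
        refine Finset.sum_congr rfl fun β _ => ?_
        rw [Finset.mul_sum]
    _ = (ℓ₁.coeff (m - 1) * ℓ₂.coeff (m + 2))
          * (∑ q : Fin m × Fin (m + 3), d q * v₁ q.1 ^ (m - 1) * v₂ q.2 ^ (m + 2)) := by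
        rw [Finset.sum_eq_single (m - 1)]
        · rw [Finset.sum_eq_single (m + 2)]
          · intro β hβ hne
            rw [hmom (m - 1) β (by simp at hβ; omega), mul_zero]
          · intro h; exact absurd (Finset.mem_range.2 (by omega)) h
        · intro α hα hne
          refine Finset.sum_eq_zero fun β hβ => ?_
          rw [hmom α β (by simp at hα hβ; omega), mul_zero]
        · intro h; exact absurd (Finset.mem_range.2 (by omega)) h
    _ = _ := by
        have h1 : ℓ₁.coeff (m - 1) = wgt v₁ i₀ := coeff_basis_top hv₁ i₀
        have h2 : ℓ₂.coeff (m + 2) = wgt v₂ j₀ := by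
          have := coeff_basis_top hv₂ j₀
          simpa using this
        rw [h1, h2]; ring



abbrev R3 := MvPolynomial (Fin 3) ℂ

end UniBiv
section MvPart
open MvPolynomial

/-- The linear form `x X₀ + y X₁ + X₂`. -/
def LF (x y : ℂ) : R3 := C x * X 0 + (C y * X 1 + X 2)

def fs (k l e : ℕ) : Fin 3 →₀ ℕ := Finsupp.single 0 k + Finsupp.single 1 l + Finsupp.single 2 e

lemma Xmon (k l e : ℕ) : (X 0 ^ k * X 1 ^ l * X 2 ^ e : R3) = monomial (fs k l e) 1 := by
  simp [fs, X_pow_eq_monomial, monomial_mul]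

lemma fs_eq_iff {k l e k' l' e' : ℕ} (h : fs k l e = fs k' l' e') : k = k' ∧ l = l' := by
  have h0 := DFunLike.congr_fun h 0
  have h1 := DFunLike.congr_fun h 1
  simp [fs, Finsupp.single_apply] at h0 h1
  exact ⟨h0, h1⟩

lemma expandL (x y : ℂ) (N : ℕ) :
    LF x y ^ N = ∑ k ∈ Finset.range (N + 1), ∑ l ∈ Finset.range (N - k + 1),
      (((N.choose k * (N - k).choose l : ℕ) : ℂ) * x ^ k * y ^ l)
        • (X 0 ^ k * X 1 ^ l * X 2 ^ (N - k - l) : R3) := by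
  rw [LF, add_pow]
  refine Finset.sum_congr rfl fun k hk => ?_
  rw [add_pow, Finset.mul_sum, Finset.sum_mul]
  refine Finset.sum_congr rfl fun l hl => ?_
  rw [smul_eq_C_mul]
  push_cast
  simp only [C_mul, C_pow, map_natCast, mul_pow, C_pow]
  ring

lemma expandL2 (x y : ℂ) (N : ℕ) :
    LF x y ^ N = ∑ z ∈ Finset.range (N + 1) ×ˢ Finset.range (N + 1),
      (((N.choose z.1 * (N - z.1).choose z.2 : ℕ) : ℂ) * x ^ z.1 * y ^ z.2)
        • (X 0 ^ z.1 * X 1 ^ z.2 * X 2 ^ (N - z.1 - z.2) : R3) := by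
  rw [expandL, Finset.sum_product]
  refine Finset.sum_congr rfl fun k hk => ?_
  simp only []
  apply Finset.sum_subset (Finset.range_subset_range.2 (Nat.succ_le_succ (Nat.sub_le N k)))
  intro l _ hl
  simp only [Finset.mem_range] at hl
  have : (N - k).choose l = 0 := Nat.choose_eq_zero_of_lt (by omega)
  rw [this]
  simp

variable {m : ℕ} {v₁ : Fin m → ℂ} {v₂ : Fin (m + 3) → ℂ}

/-- The coefficients of the canonical relation. -/
def cc (v₁ : Fin m → ℂ) (v₂ : Fin (m + 3) → ℂ) (p : Fin m × Fin (m + 3)) : ℂ :=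
  wgt v₁ p.1 * wgt v₂ p.2

/-- The fundamental relation among the `2m`-th powers of the grid linear forms. -/
lemma grid_rel (hv₁ : Function.Injective v₁) (hv₂ : Function.Injective v₂) (hm : 1 ≤ m) :
    ∑ p : Fin m × Fin (m + 3), cc v₁ v₂ p • LF (v₁ p.1) (v₂ p.2) ^ (2 * m) = 0 := by
  set N := 2 * m with hN
  calc ∑ p : Fin m × Fin (m + 3), cc v₁ v₂ p • LF (v₁ p.1) (v₂ p.2) ^ N
      = ∑ p : Fin m × Fin (m + 3), ∑ z ∈ Finset.range (N + 1) ×ˢ Finset.range (N + 1),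
          (cc v₁ v₂ p * (((N.choose z.1 * (N - z.1).choose z.2 : ℕ) : ℂ)
            * v₁ p.1 ^ z.1 * v₂ p.2 ^ z.2))
          • (X 0 ^ z.1 * X 1 ^ z.2 * X 2 ^ (N - z.1 - z.2) : R3) := by
        refine Finset.sum_congr rfl fun p _ => ?_
        rw [expandL2, Finset.smul_sum]
        exact Finset.sum_congr rfl fun z _ => by rw [smul_smul]
    _ = ∑ z ∈ Finset.range (N + 1) ×ˢ Finset.range (N + 1),
          (∑ p : Fin m × Fin (m + 3), cc v₁ v₂ p * (((N.choose z.1 * (N - z.1).choose z.2 : ℕ) : ℂ)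
            * v₁ p.1 ^ z.1 * v₂ p.2 ^ z.2))
          • (X 0 ^ z.1 * X 1 ^ z.2 * X 2 ^ (N - z.1 - z.2) : R3) := by
        rw [Finset.sum_comm]
        exact Finset.sum_congr rfl fun z _ => (Finset.sum_smul).symm
    _ = 0 := by
        refine Finset.sum_eq_zero fun z hz => ?_
        obtain ⟨k, l⟩ := z
        simp only [Finset.mem_product, Finset.mem_range] at hz
        have hfact : ∑ p : Fin m × Fin (m + 3), cc v₁ v₂ p
            * (((N.choose k * (N - k).choose l : ℕ) : ℂ) * v₁ p.1 ^ k * v₂ p.2 ^ l)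
            = ((N.choose k * (N - k).choose l : ℕ) : ℂ)
              * ((∑ i, wgt v₁ i * v₁ i ^ k) * (∑ j, wgt v₂ j * v₂ j ^ l)) := by
          rw [Finset.sum_mul_sum, Fintype.sum_prod_type, Finset.mul_sum]
          refine Finset.sum_congr rfl fun i _ => ?_
          rw [Finset.mul_sum]
          refine Finset.sum_congr rfl fun j _ => ?_
          rw [cc]; ring
        rw [hfact]
        rcases le_or_gt (k + 2) m with hk | hk
        · rw [sum_wgt_pow hv₁ hk]; simp
        · rcases le_or_gt (l + 2) (m + 3) with hl | hl
          · rw [sum_wgt_pow hv₂ hl]; simp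
          · have : (N - k).choose l = 0 := Nat.choose_eq_zero_of_lt (by omega)
            rw [this]; simp
  
lemma coeff_LF_pow (x y : ℂ) (N α β : ℕ) (hαβ : α + β ≤ N) :
    coeff (fs α β (N - α - β)) (LF x y ^ N)
      = ((N.choose α * (N - α).choose β : ℕ) : ℂ) * x ^ α * y ^ β := by
  rw [expandL2]
  rw [coeff_sum]
  rw [Finset.sum_eq_single (α, β)]
  · rw [coeff_smul, Xmon, coeff_monomial, if_pos rfl]
    simp [smul_eq_mul]
  · rintro ⟨k, l⟩ _ hne
    rw [coeff_smul, Xmon, coeff_monomial, if_neg, smul_zero]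
    intro h
    obtain ⟨h1, h2⟩ := fs_eq_iff h
    exact hne (Prod.ext h1 h2)
  · intro h
    exact absurd (Finset.mem_product.2 ⟨Finset.mem_range.2 (by omega), Finset.mem_range.2 (by omega)⟩) h

/-- Moment extraction: a vanishing linear combination of powers has vanishing moments. -/
lemma moments_of_rel (d : Fin m × Fin (m + 3) → ℂ)
    (hrel : ∑ p : Fin m × Fin (m + 3), d p • LF (v₁ p.1) (v₂ p.2) ^ (2 * m) = 0)
    (α β : ℕ) (hαβ : α + β ≤ 2 * m) :
    ∑ p : Fin m × Fin (m + 3), d p * v₁ p.1 ^ α * v₂ p.2 ^ β = 0 := by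
  set N := 2 * m
  have h := congrArg (coeff (fs α β (N - α - β))) hrel
  rw [coeff_sum] at h
  simp only [coeff_smul, coeff_zero] at h
  have h2 : ∑ p : Fin m × Fin (m + 3),
      d p * (((N.choose α * (N - α).choose β : ℕ) : ℂ) * v₁ p.1 ^ α * v₂ p.2 ^ β) = 0 := by
    rw [← h]
    exact Finset.sum_congr rfl fun p _ => by rw [coeff_LF_pow _ _ _ _ _ hαβ, smul_eq_mul]
  have hch : ((N.choose α * (N - α).choose β : ℕ) : ℂ) ≠ 0 := by
    have hp : 0 < N.choose α * (N - α).choose β :=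
      Nat.mul_pos (Nat.choose_pos (by omega)) (Nat.choose_pos (by omega))
    exact_mod_cast Nat.cast_ne_zero.2 hp.ne'
  have h3 : ((N.choose α * (N - α).choose β : ℕ) : ℂ)
      * ∑ p : Fin m × Fin (m + 3), d p * v₁ p.1 ^ α * v₂ p.2 ^ β = 0 := by
    rw [← h2, Finset.mul_sum]
    exact Finset.sum_congr rfl fun p _ => by ring
  exact (mul_eq_zero.1 h3).resolve_left hch



end MvPart
section Assembly
open MvPolynomial

variable {m : ℕ} (hm : 2 ≤ m)

def v₁ (m : ℕ) : Fin m → ℂ := fun i => (i : ℕ)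
def v₂ (m : ℕ) : Fin (m + 3) → ℂ := fun j => (j : ℕ)

lemma hv₁ : Function.Injective (v₁ m) := fun i j h => by
  simp only [v₁, Nat.cast_inj] at h; exact Fin.ext h
lemma hv₂ : Function.Injective (v₂ m) := fun i j h => by
  simp only [v₂, Nat.cast_inj] at h; exact Fin.ext h

/-- grid index type -/
abbrev ι (m : ℕ) := Fin m × Fin (m + 3)

def uvec (p : ι m) : Fin 3 → ℂ := ![v₁ m p.1, v₂ m p.2, 1]

lemma uvec_ne_zero (p : ι m) : uvec p ≠ 0 := fun h => by
  have := congrFun h 2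
  simp [uvec] at this

def Pt (p : ι m) : Proj 2 := Projectivization.mk ℂ (uvec p) (uvec_ne_zero p)

lemma Pt_inj : Function.Injective (Pt (m := m)) := by
  intro p q h
  rw [Pt, Pt, Projectivization.mk_eq_mk_iff] at h
  obtain ⟨a, ha⟩ := h
  have h2 := congrFun ha 2
  simp [uvec, Units.smul_def] at h2
  have h0 := congrFun ha 0
  have h1 := congrFun ha 1
  simp [uvec, Units.smul_def, h2] at h0 h1
  exact Prod.ext (hv₁ h0.symm) (hv₂ h1.symm)

/-- the powered linear forms -/
def LLp (m : ℕ) (p : ι m) : R3 := LF (v₁ m p.1) (v₂ m p.2) ^ (2 * m)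

lemma linForm_smul (c : ℂ) (w : Fin 3 → ℂ) : linForm 2 (c • w) = C c * linForm 2 w := by
  simp only [linForm, Finset.mul_sum, Pi.smul_apply, smul_eq_mul, map_mul, mul_assoc]

lemma linForm_uvec (p : ι m) : linForm 2 (uvec p) = LF (v₁ m p.1) (v₂ m p.2) := by
  simp [linForm, LF, Fin.sum_univ_three, uvec]
  ring

lemma vero_Pt (p : ι m) : ∃ s : ℂ, s ≠ 0 ∧ vero 2 (2 * m) (Pt p) = s • LLp m p := by
  obtain ⟨a, ha⟩ := Projectivization.exists_smul_eq_mk_rep ℂ (uvec p) (uvec_ne_zero p)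
  refine ⟨(a : ℂ) ^ (2 * m), pow_ne_zero _ a.ne_zero, ?_⟩
  rw [vero, Pt, ← ha, Units.smul_def, linForm_smul, linForm_uvec, mul_pow, ← C_pow, LLp,
    ← smul_eq_C_mul]

lemma LLp_eq_smul_vero (p : ι m) : ∃ s : ℂ, s ≠ 0 ∧ LLp m p = s • vero 2 (2 * m) (Pt p) := by
  obtain ⟨s, hs, h⟩ := vero_Pt p
  exact ⟨s⁻¹, inv_ne_zero hs, by rw [h, smul_smul, inv_mul_cancel₀ hs, one_smul]⟩

lemma cc_ne_zero (p : ι m) : cc (v₁ m) (v₂ m) p ≠ 0 :=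
  mul_ne_zero (wgt_ne_zero hv₁ p.1) (wgt_ne_zero hv₂ p.2)

/-- Key vanishing: a dependence among the powers missing one point is trivial. -/
lemma vanish (hm : 1 ≤ m) (E : Finset (ι m)) (q : ι m) (hq : q ∉ E) (d : ι m → ℂ)
    (hrel : ∑ p ∈ E, d p • LLp m p = 0) : ∀ p ∈ E, d p = 0 := by
  set d' : ι m → ℂ := fun p => if p ∈ E then d p else 0 with hd'
  have hrel' : ∑ p : ι m, d' p • LLp m p = 0 := by
    rw [← hrel]
    simp only [hd', ite_smul, zero_smul]
    rw [Finset.sum_ite_mem, Finset.univ_inter]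
  have hprop := prop_of_moments hv₁ hv₂ (by omega) d'
    (moments_of_rel d' hrel')
  have hq0 : d' q = 0 := by simp [hd', hq]
  have he : (∑ r : ι m, d' r * v₁ m r.1 ^ (m - 1) * v₂ m r.2 ^ (m + 2)) = 0 := by
    have := (hprop q).symm.trans hq0
    rcases mul_eq_zero.1 this with h | h
    · exact h
    · exact absurd h (cc_ne_zero q)
  intro p hp
  have := hprop p
  rw [he, zero_mul] at this
  simpa [hd', hp] using this

lemma exists_third (hm : 2 ≤ m) (p q : ι m) : ∃ q' : ι m, q' ≠ p ∧ q' ≠ q := by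
  by_contra h
  push_neg at h
  have hsub : (Finset.univ : Finset (ι m)) ⊆ {p, q} := fun x _ => by
    rcases Classical.em (x = p) with h1 | h1
    · simp [h1]
    · simp [h x h1]
  have hc := Finset.card_le_card hsub
  rw [Finset.card_univ] at hc
  have h2 : Fintype.card (ι m) = m * (m + 3) := by simp
  have h3 : ({p, q} : Finset (ι m)).card ≤ 2 := Finset.card_insert_le _ _ |>.trans (by simp)
  have : 2 * 5 ≤ m * (m + 3) := Nat.mul_le_mul hm (by omega)
  omega

lemma veroPt_inj (hm : 2 ≤ m) :
    Function.Injective (fun p : ι m => vero 2 (2 * m) (Pt p)) := by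
  intro p q h
  by_contra hne
  obtain ⟨s, hs, hsv⟩ := vero_Pt (m := m) p
  obtain ⟨s', hs', hsv'⟩ := vero_Pt (m := m) q
  obtain ⟨q', hq'p, hq'q⟩ := exists_third hm p q
  change vero 2 (2 * m) (Pt p) = vero 2 (2 * m) (Pt q) at h
  set d : ι m → ℂ := fun r => if r = p then s else -s' with hd
  have hrel : ∑ r ∈ ({p, q} : Finset (ι m)), d r • LLp m r = 0 := by
    rw [Finset.sum_pair hne]
    simp only [hd, if_pos rfl, if_neg (fun hh : q = p => hne hh.symm)]
    rw [neg_smul, ← hsv, ← hsv', h]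
    simp
  have := vanish (by omega) {p, q} q' (by simp [hq'p, hq'q]) d hrel p (by simp)
  simp [hd] at this
  exact hs this

lemma card_ι : Fintype.card (ι m) = m * (m + 3) := by simp

lemma choose_arith (hm : 2 ≤ m) :
    m * (m + 3) = 2 * (Nat.choose (m + 2) 2 - 1) ∧ 1 ≤ Nat.choose (m + 2) 2 - 1 := by
  have h : (m + 2) * ((m + 1).choose 1) = ((m + 2).choose 2) * 2 :=
    Nat.add_one_mul_choose_eq (m + 1) 1
  rw [Nat.choose_one_right] at h
  have hexp : (m + 2) * (m + 1) = m * (m + 3) + 2 := by ring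
  have hge : 2 * 5 ≤ m * (m + 3) := Nat.mul_le_mul hm (by omega)
  omega

lemma mem_span_of_sum (E : Finset (ι m)) (co : ι m → ℂ) :
    (∑ p ∈ E, co p • LLp m p) ∈
      Submodule.span ℂ (vero 2 (2 * m) '' ((E.image Pt : Finset (Proj 2)) : Set (Proj 2))) := by
  refine Submodule.sum_mem _ fun p hp => ?_
  obtain ⟨s, hs, hL⟩ := LLp_eq_smul_vero p
  rw [hL, smul_smul]
  refine Submodule.smul_mem _ _ (Submodule.subset_span ?_)
  exact Set.mem_image_of_mem _ (Finset.mem_coe.2 (Finset.mem_image_of_mem _ hp))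

lemma LF_homog (x y : ℂ) : (LF x y).IsHomogeneous 1 :=
  (((isHomogeneous_X ℂ 0).C_mul x).add (((isHomogeneous_X ℂ 1).C_mul y).add (isHomogeneous_X ℂ 2)))

lemma sum_homog (E : Finset (ι m)) (co : ι m → ℂ) :
    (∑ p ∈ E, co p • LLp m p).IsHomogeneous (2 * m) := by
  refine IsHomogeneous.sum E _ (2 * m) fun p _ => ?_
  rw [smul_eq_C_mul]
  refine IsHomogeneous.C_mul ?_ _
  have := (LF_homog (v₁ m p.1) (v₂ m p.2)).pow (2 * m)
  simpa [LLp] using this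

lemma nonredSide (hm : 2 ≤ m) (S₁ S₂ : Finset (ι m)) (hd : Disjoint S₁ S₂) (hS₁ : S₁.Nonempty)
    (co : ι m → ℂ) (hco : ∀ p ∈ S₁, co p ≠ 0) (A' : Finset (Proj 2)) (hA' : A' ⊂ S₂.image Pt)
    (hC : Computes 2 (2 * m) A' (∑ p ∈ S₁, co p • LLp m p)) : False := by
  classical
  set G : Finset (ι m) := S₂.filter (fun p => Pt p ∈ A') with hG
  have hGA' : A' = G.image Pt := by
    ext y; constructor
    · intro hy
      obtain ⟨p, hp, rfl⟩ := Finset.mem_image.1 (hA'.subset hy)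
      exact Finset.mem_image_of_mem _ (Finset.mem_filter.2 ⟨hp, hy⟩)
    · intro hy
      obtain ⟨p, hp, rfl⟩ := Finset.mem_image.1 hy
      exact (Finset.mem_filter.1 hp).2
  obtain ⟨y, hyS₂, hyA'⟩ := Finset.exists_of_ssubset hA'
  obtain ⟨qa, hqa, rfl⟩ := Finset.mem_image.1 hyS₂
  have hqaG : qa ∉ G := fun hh => hyA' ((Finset.mem_filter.1 hh).2)
  have hqaS₁ : qa ∉ S₁ := fun hh => (Finset.disjoint_left.1 hd hh) hqa
  rw [Computes, hGA', ← Finset.coe_image, Finset.image_image, Submodule.mem_span_finset] at hC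
  obtain ⟨g, -, hg⟩ := hC
  have hinj : ∀ x ∈ G, ∀ y ∈ G, (vero 2 (2 * m) ∘ Pt) x = (vero 2 (2 * m) ∘ Pt) y → x = y :=
    fun x _ y _ h => veroPt_inj hm h
  rw [Finset.sum_image hinj] at hg
  choose sfun hs0 hsev using vero_Pt (m := m)
  set e : ι m → ℂ := fun p => g (vero 2 (2 * m) (Pt p)) * sfun p with he
  have hg' : ∑ p ∈ G, e p • LLp m p = ∑ p ∈ S₁, co p • LLp m p := by
    rw [← hg]
    refine Finset.sum_congr rfl fun p _ => ?_
    rw [he]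
    simp only [Function.comp_apply]
    rw [hsev p, smul_smul]
  have hdisj : Disjoint S₁ G := hd.mono_right (Finset.filter_subset _ _)
  set dd : ι m → ℂ := fun p => if p ∈ S₁ then co p else -e p with hdd
  have hrel : ∑ p ∈ S₁ ∪ G, dd p • LLp m p = 0 := by
    rw [Finset.sum_union hdisj]
    have h1 : ∑ p ∈ S₁, dd p • LLp m p = ∑ p ∈ S₁, co p • LLp m p :=
      Finset.sum_congr rfl fun p hp => by rw [hdd]; simp only [if_pos hp]
    have h2 : ∑ p ∈ G, dd p • LLp m p = -∑ p ∈ G, e p • LLp m p := by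
      rw [← Finset.sum_neg_distrib]
      refine Finset.sum_congr rfl fun p hp => ?_
      have : p ∉ S₁ := Finset.disjoint_right.1 hdisj hp
      rw [hdd]; simp only [if_neg this, neg_smul]
    rw [h1, h2, hg', add_neg_cancel]
  have hvan := vanish (by omega) (S₁ ∪ G) qa (by simp [hqaS₁, hqaG]) dd hrel
  obtain ⟨p₀, hp₀⟩ := hS₁
  have := hvan p₀ (Finset.mem_union_left _ hp₀)
  rw [hdd] at this
  simp only [if_pos hp₀] at this
  exact hco p₀ hp₀ this

end Assembly
end Stmt12Aux
end

section Main
open Stmt12Aux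

/-- Sharpness, even case: for `d = 2m`, `m ≥ 2`, there is a nonzero form of degree `d`
with two disjoint non-redundant decompositions of length `binom(m+2,2) - 1`. -/
theorem stmt12 (m : ℕ) (hm : 2 ≤ m) :
    ∃ (T : MvPolynomial (Fin 3) ℂ) (A B : Finset (Proj 2)),
      T ≠ 0 ∧ T.IsHomogeneous (2 * m) ∧ A ∩ B = ∅ ∧
      A.card = Nat.choose (m + 2) 2 - 1 ∧ B.card = Nat.choose (m + 2) 2 - 1 ∧
      NRComputes 2 (2 * m) A T ∧ NRComputes 2 (2 * m) B T := by
  classical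
  obtain ⟨harith, hr1⟩ := choose_arith (m := m) hm
  have hcard : Fintype.card (ι m) = 2 * (Nat.choose (m + 2) 2 - 1) := by
    rw [card_ι]; omega
  obtain ⟨S, hSsub, hScard⟩ := Finset.exists_subset_card_eq (s := (Finset.univ : Finset (ι m)))
    (n := Nat.choose (m + 2) 2 - 1) (by rw [Finset.card_univ, hcard]; omega)
  have hSc_card : Sᶜ.card = Nat.choose (m + 2) 2 - 1 := by
    rw [Finset.card_compl, hScard, hcard]; omega
  have hSne : S.Nonempty := Finset.card_pos.1 (by omega)
  have hScne : Sᶜ.Nonempty := Finset.card_pos.1 (by omega)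
  have hTB : ∑ p ∈ S, cc (v₁ m) (v₂ m) p • LLp m p
      = ∑ p ∈ Sᶜ, (-(cc (v₁ m) (v₂ m) p)) • LLp m p := by
    have h0 : ∑ p : ι m, cc (v₁ m) (v₂ m) p • LLp m p = 0 :=
      grid_rel (hv₁ (m := m)) (hv₂ (m := m)) (by omega)
    have hsplit := Finset.sum_add_sum_compl S (fun p => cc (v₁ m) (v₂ m) p • LLp m p)
    rw [h0] at hsplit
    calc ∑ p ∈ S, cc (v₁ m) (v₂ m) p • LLp m p
        = -(∑ p ∈ Sᶜ, cc (v₁ m) (v₂ m) p • LLp m p) := eq_neg_of_add_eq_zero_left hsplit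
      _ = ∑ p ∈ Sᶜ, (-(cc (v₁ m) (v₂ m) p)) • LLp m p := by
          rw [← Finset.sum_neg_distrib]
          exact Finset.sum_congr rfl fun p _ => (neg_smul _ _).symm
  refine ⟨∑ p ∈ S, cc (v₁ m) (v₂ m) p • LLp m p, S.image Pt, Sᶜ.image Pt,
    ?_, ?_, ?_, ?_, ?_, ⟨?_, ?_⟩, ⟨?_, ?_⟩⟩
  · intro h0
    obtain ⟨q, hq⟩ := hScne
    have hvan := vanish (by omega) S q (Finset.mem_compl.1 hq) _ h0
    obtain ⟨p₀, hp₀⟩ := hSne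
    exact cc_ne_zero p₀ (hvan p₀ hp₀)
  · exact sum_homog S _
  · rw [Finset.eq_empty_iff_forall_notMem]
    intro y hy
    obtain ⟨hyA, hyB⟩ := Finset.mem_inter.1 hy
    obtain ⟨p, hp, rfl⟩ := Finset.mem_image.1 hyA
    obtain ⟨q, hq, heq⟩ := Finset.mem_image.1 hyB
    rw [Pt_inj heq] at hq
    exact (Finset.mem_compl.1 hq) hp
  · rw [Finset.card_image_of_injective _ Pt_inj, hScard]
  · rw [Finset.card_image_of_injective _ Pt_inj, hSc_card]
  · exact mem_span_of_sum S _
  · intro A' hA' hC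
    rw [hTB] at hC
    exact nonredSide hm Sᶜ S disjoint_compl_left hScne _
      (fun p _ => neg_ne_zero.2 (cc_ne_zero p)) A' hA' hC
  · show Computes _ _ _ _
    rw [Computes, hTB]
    exact mem_span_of_sum Sᶜ _
  · intro B' hB' hC
    exact nonredSide hm S Sᶜ disjoint_compl_right hSne _
      (fun p _ => cc_ne_zero p) B' hB' hC

end Main
end

section
/- For every integer e ≥ 1, setting d = 4e + 1 and r = binom(2e+2,2) + e + 1, there exist a nonzero ternary form T ∈ S^d ℂ³ and finite sets A, B ⊆ ℙ²(ℂ) with A ∩ B = ∅ and ℓ(A) = ℓ(B) = r, such that both A and B are non-redundant sets computing T. (In particular the bound r ≤ binom(m+2,2) + ⌊m/2⌋ in the identifiability criterion for odd-degree ternary forms is sharp when d ≡ 1 mod 4.) -/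
open MvPolynomial

/-!
Put `m = 2e + 1`. Taking the `m`-th forward difference in two directions gives the relation
`∑_{i,j ≤ m} (-1)^(i+j) binom(m,i) binom(m,j) (i x + j y + z)^d = 0`, because every monomial
`i^a j^b` of the expansion has `a + b ≤ d < 2m`. Splitting the grid of points `(i : j : 1)`,
`0 ≤ i, j ≤ m`, into the columns `i ≤ e` and `i > e` writes one form `T` in two ways over
disjoint sets of `(e + 1)(2e + 2) = binom(2e+2,2) + e + 1` points. Each half is an `a × b` grid
with `a + b ≤ d + 2`, so for each of its points the lines through the other rows and columns,
padded by copies of `z = 0`, form a product of `d` linear forms vanishing exactly at the other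
points; by apolarity the `d`-th powers of the points are linearly independent, and since all
coefficients are nonzero, neither decomposition can be shortened.
-/

open Finset

def altChoose (m k : ℕ) : ℤ := (-1) ^ (m - k) * m.choose k

lemma altChoose_ne_zero {m k : ℕ} (hk : k ≤ m) : altChoose m k ≠ 0 :=
  mul_ne_zero (pow_ne_zero _ (by norm_num)) (Nat.cast_ne_zero.2 (Nat.choose_pos hk).ne')

theorem sum_altChoose_smul_eval_eq_zero {S : Type*} [CommRing S] {m : ℕ}
    (P : Polynomial S) (hP : P.natDegree < m) :
    ∑ k ∈ range (m + 1), altChoose m k • P.eval (k : S) = 0 := by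
  simpa [altChoose, fwdDiff_iter_eq_sum_shift] using
    congrFun (Polynomial.fwdDiff_iter_eq_zero_of_degree_lt hP) 0

theorem sum_altChoose_mul_smul_pow_eq_zero {S : Type*} [CommRing S] {m d : ℕ}
    (hd : d < 2 * m) (x y z : S) :
    ∑ i ∈ range (m + 1), ∑ j ∈ range (m + 1),
      (altChoose m i * altChoose m j) • ((i : S) * x + (j : S) * y + z) ^ d = 0 := by
  have hexpand : ∀ i j : ℕ,
      (altChoose m i * altChoose m j) • ((i : S) * x + (j : S) * y + z) ^ d =
      ∑ a ∈ range (d + 1), (d.choose a : S) * x ^ a *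
        (altChoose m i • (i : S) ^ a) * (altChoose m j • ((j : S) * y + z) ^ (d - a)) := by
    intro i j
    rw [add_assoc, add_pow, Finset.smul_sum]
    refine Finset.sum_congr rfl fun a _ => ?_
    simp only [zsmul_eq_mul, Int.cast_mul]
    ring
  calc _ = ∑ i ∈ range (m + 1), ∑ a ∈ range (d + 1),
        (d.choose a : S) * x ^ a * (altChoose m i • (i : S) ^ a) *
          ∑ j ∈ range (m + 1), altChoose m j • ((j : S) * y + z) ^ (d - a) := by
        refine Finset.sum_congr rfl fun i _ => ?_
        simp only [hexpand, Finset.mul_sum]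
        exact Finset.sum_comm
    _ = ∑ a ∈ range (d + 1), (d.choose a : S) * x ^ a *
        (∑ i ∈ range (m + 1), altChoose m i • (i : S) ^ a) *
        ∑ j ∈ range (m + 1), altChoose m j • ((j : S) * y + z) ^ (d - a) := by
        rw [Finset.sum_comm]
        refine Finset.sum_congr rfl fun a _ => ?_
        rw [← Finset.sum_mul, ← Finset.mul_sum]
    _ = 0 := by
        refine Finset.sum_eq_zero fun a ha => ?_
        rcases lt_or_ge a m with ham | ham
        · have := sum_altChoose_smul_eval_eq_zero (Polynomial.X ^ a : Polynomial S)
            ((Polynomial.natDegree_X_pow_le a).trans_lt ham)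
          simp only [Polynomial.eval_pow, Polynomial.eval_X] at this
          rw [this, mul_zero, zero_mul]
        · have := sum_altChoose_smul_eval_eq_zero (m := m)
            ((Polynomial.C y * Polynomial.X + Polynomial.C z) ^ (d - a))
            ((Polynomial.natDegree_pow_le_of_le _ Polynomial.natDegree_linear_le).trans_lt
              (by have := mem_range.1 ha; omega))
          simp only [Polynomial.eval_pow, Polynomial.eval_add, Polynomial.eval_mul,
            Polynomial.eval_C, Polynomial.eval_X, mul_comm y] at this
          rw [this, mul_zero]

noncomputable section LinearForms

variable {n : ℕ}

lemma linForm_smul (t : ℂ) (v : Fin (n + 1) → ℂ) : linForm n (t • v) = t • linForm n v := by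
  simp only [linForm, Finset.smul_sum, Pi.smul_apply, smul_eq_mul, map_mul, smul_eq_C_mul]
  exact Finset.sum_congr rfl fun _ _ => by ring

lemma isHomogeneous_linForm (v : Fin (n + 1) → ℂ) : (linForm n v).IsHomogeneous 1 :=
  IsHomogeneous.sum _ _ _ fun _ _ => isHomogeneous_C_mul_X _ _

lemma isHomogeneous_sum_smul_linForm_pow {d : ℕ} {ι : Type*} (s : Finset ι) (c : ι → ℂ)
    (v : ι → Fin (n + 1) → ℂ) : (∑ k ∈ s, c k • linForm n (v k) ^ d).IsHomogeneous d := by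
  refine IsHomogeneous.sum _ _ _ fun k _ => ?_
  rw [smul_eq_C_mul]
  simpa using ((isHomogeneous_linForm (v k)).pow d).C_mul (c k)

def dirDeriv (w : Fin (n + 1) → ℂ) :
    Derivation ℂ (MvPolynomial (Fin (n + 1)) ℂ) (MvPolynomial (Fin (n + 1)) ℂ) :=
  ∑ i, w i • pderiv i

lemma dirDeriv_apply (w : Fin (n + 1) → ℂ) (F : MvPolynomial (Fin (n + 1)) ℂ) :
    dirDeriv w F = ∑ i, w i • pderiv i F := by
  rw [dirDeriv, ← Derivation.coeFnAddMonoidHom_apply, map_sum]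
  simp [Finset.sum_apply, Derivation.coeFnAddMonoidHom_apply]

lemma dirDeriv_linForm (w v : Fin (n + 1) → ℂ) : dirDeriv w (linForm n v) = C (w ⬝ᵥ v) := by
  simp [dirDeriv_apply, linForm, Pi.single_apply, dotProduct, smul_eq_C_mul, mul_comm]

lemma dirDeriv_linForm_pow_succ (w v : Fin (n + 1) → ℂ) (k : ℕ) :
    dirDeriv w (linForm n v ^ (k + 1)) = ((k + 1) * (w ⬝ᵥ v)) • linForm n v ^ k := by
  rw [Derivation.leibniz_pow, dirDeriv_linForm, add_tsub_cancel_right, smul_eq_C_mul,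
    smul_eq_mul, nsmul_eq_mul]
  push_cast
  simp only [map_add, map_mul, map_natCast, map_one]
  rw [mul_assoc, mul_comm (C _)]

def iteratedDirDeriv : List (Fin (n + 1) → ℂ) → Module.End ℂ (MvPolynomial (Fin (n + 1)) ℂ)
  | [] => 1
  | w :: ws => iteratedDirDeriv ws * (dirDeriv w : _ →ₗ[ℂ] _)

lemma iteratedDirDeriv_linForm_pow (ws : List (Fin (n + 1) → ℂ)) (v : Fin (n + 1) → ℂ) :
    iteratedDirDeriv ws (linForm n v ^ ws.length) =
      C (ws.length.factorial * (ws.map (· ⬝ᵥ v)).prod) := by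
  induction ws with
  | nil => simp [iteratedDirDeriv]
  | cons w ws ih =>
    rw [iteratedDirDeriv, Module.End.mul_apply, Derivation.coeFn_coe, List.length_cons,
      dirDeriv_linForm_pow_succ, map_smul, ih, smul_eq_C_mul, ← map_mul]
    simp only [List.map_cons, List.prod_cons, Nat.factorial_succ]
    push_cast
    congr 1
    ring

theorem linearIndepOn_linForm_pow_of_separating {ι : Type*} (d : ℕ) (v : ι → Fin (n + 1) → ℂ)
    (s : Set ι) (hsep : ∀ k ∈ s, ∃ ws : List (Fin (n + 1) → ℂ), ws.length = d ∧
      (ws.map (· ⬝ᵥ v k)).prod ≠ 0 ∧ ∀ l ∈ s, l ≠ k → (ws.map (· ⬝ᵥ v l)).prod = 0) :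
    LinearIndepOn ℂ (fun k => linForm n (v k) ^ d) s := by
  rw [linearIndepOn_iff']
  intro t g hts hsum k hk
  obtain ⟨ws, rfl, hk_ne, hothers⟩ := hsep k (hts hk)
  have hpair := congrArg (fun F => coeff 0 (iteratedDirDeriv ws F)) hsum
  simp only [map_sum, map_smul, coeff_sum, coeff_smul, iteratedDirDeriv_linForm_pow, coeff_C,
    if_true, smul_eq_mul, map_zero, coeff_zero] at hpair
  rw [Finset.sum_eq_single_of_mem k hk fun l hl hlk => by
    rw [hothers l (hts hl) hlk, mul_zero, mul_zero]] at hpair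
  simpa [hk_ne, Nat.factorial_ne_zero] using hpair

end LinearForms

section NonRedundant

variable {n d : ℕ}

lemma exists_vero_mk_eq_smul (v : Fin (n + 1) → ℂ) (hv : v ≠ 0) :
    ∃ a : ℂˣ, vero n d (Projectivization.mk ℂ v hv) = a • linForm n v ^ d := by
  obtain ⟨a, ha⟩ := Projectivization.exists_smul_eq_mk_rep ℂ v hv
  refine ⟨a ^ d, ?_⟩
  rw [vero, ← ha, Units.smul_def, linForm_smul, smul_pow, Units.smul_def, Units.val_pow_eq_pow_val]

lemma span_vero_image_mk {ι : Type*} (v : ι → Fin (n + 1) → ℂ) (hv : ∀ k, v k ≠ 0)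
    (s : Set ι) :
    Submodule.span ℂ (vero n d '' ((fun k => Projectivization.mk ℂ (v k) (hv k)) '' s)) =
      Submodule.span ℂ ((fun k => linForm n (v k) ^ d) '' s) := by
  rw [← Set.image_comp]
  apply le_antisymm <;> rw [Submodule.span_le] <;> rintro _ ⟨k, hk, rfl⟩ <;>
    obtain ⟨a, ha⟩ := exists_vero_mk_eq_smul (d := d) (v k) (hv k)
  · rw [Function.comp_apply, ha]
    exact Submodule.smul_of_tower_mem _ a (Submodule.subset_span (Set.mem_image_of_mem _ hk))
  · beta_reduce
    rw [SetLike.mem_coe, ← inv_smul_eq_iff.2 ha]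
    exact Submodule.smul_of_tower_mem _ a⁻¹ (Submodule.subset_span (Set.mem_image_of_mem _ hk))

theorem nrComputes_image_mk {ι : Type*} [DecidableEq ι] (v : ι → Fin (n + 1) → ℂ)
    (hv : ∀ k, v k ≠ 0) (s : Finset ι)
    (hli : LinearIndepOn ℂ (fun k => linForm n (v k) ^ d) (s : Set ι))
    (c : ι → ℂ) (hc : ∀ k ∈ s, c k ≠ 0) :
    NRComputes n d (s.image fun k => Projectivization.mk ℂ (v k) (hv k))
      (∑ k ∈ s, c k • linForm n (v k) ^ d) := by
  set P := fun k => Projectivization.mk ℂ (v k) (hv k)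
  set L := fun k => linForm n (v k) ^ d
  refine ⟨?_, fun A' hA' hcomp => ?_⟩
  · rw [Computes, coe_image, span_vero_image_mk]
    exact Submodule.sum_mem _ fun k hk =>
      Submodule.smul_mem _ _ (Submodule.subset_span (Set.mem_image_of_mem _ hk))
  obtain ⟨_, hQ, hQA'⟩ := exists_of_ssubset hA'
  obtain ⟨k₀, hk₀, rfl⟩ := mem_image.1 hQ
  have hA' : (A' : Set (Proj n)) ⊆ P '' (↑s \ {k₀}) := fun Q hQ' => by
    obtain ⟨k, hk, rfl⟩ := mem_image.1 (hA'.1 hQ')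
    exact ⟨k, ⟨hk, fun h => hQA' ((Set.mem_singleton_iff.1 h) ▸ hQ')⟩, rfl⟩
  have hspan : ∑ k ∈ s, c k • L k ∈ Submodule.span ℂ (L '' (↑s \ {k₀})) := by
    rw [← span_vero_image_mk v hv]
    exact Submodule.span_mono (Set.image_mono hA') hcomp
  rw [← add_sum_erase s _ hk₀] at hspan
  refine hc k₀ hk₀ (hli.eq_zero_of_smul_mem_span hk₀ _ ((Submodule.add_mem_iff_left _ ?_).1 hspan))
  refine Submodule.sum_mem _ fun k hk => Submodule.smul_mem _ _ (Submodule.subset_span ?_)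
  exact Set.mem_image_of_mem _ ⟨mem_of_mem_erase hk, ne_of_mem_erase hk⟩

lemma NRComputes.ne_zero {A : Finset (Proj n)} {T : MvPolynomial (Fin (n + 1)) ℂ}
    (h : NRComputes n d A T) (hA : A.Nonempty) : T ≠ 0 := fun hT =>
  h.2 ∅ (empty_ssubset.2 hA) (hT ▸ Submodule.zero_mem _)

end NonRedundant

noncomputable section Grid

def gridVec (q : ℕ × ℕ) : Fin 3 → ℂ := ![(q.1 : ℂ), q.2, 1]

lemma gridVec_ne_zero (q : ℕ × ℕ) : gridVec q ≠ 0 := fun h => by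
  simpa [gridVec] using congrFun h 2

def gridPt (q : ℕ × ℕ) : Proj 2 := Projectivization.mk ℂ (gridVec q) (gridVec_ne_zero q)

lemma gridPt_injective : Function.Injective gridPt := by
  intro q q' h
  obtain ⟨a, ha⟩ := (Projectivization.mk_eq_mk_iff _ _ _ _ _).1 h
  have h2 := congrFun ha 2
  have h0 := congrFun ha 0
  have h1 := congrFun ha 1
  simp only [gridVec, Units.smul_def, Pi.smul_apply, Matrix.cons_val, smul_eq_mul,
    mul_one] at h0 h1 h2
  simp only [h2, one_mul, Nat.cast_inj] at h0 h1
  exact Prod.ext h0.symm h1.symm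

lemma linForm_gridVec (q : ℕ × ℕ) :
    linForm 2 (gridVec q) =
      (q.1 : MvPolynomial (Fin 3) ℂ) * X 0 + (q.2 : MvPolynomial (Fin 3) ℂ) * X 1 + X 2 := by
  simp [linForm, gridVec, Fin.sum_univ_three]

def gridSeparator (d : ℕ) (I J : Finset ℕ) (q : ℕ × ℕ) : List (Fin 3 → ℂ) :=
  (I.erase q.1).toList.map (fun i : ℕ => ![1, 0, -(i : ℂ)]) ++
    (J.erase q.2).toList.map (fun j : ℕ => ![0, 1, -(j : ℂ)]) ++
    List.replicate (d + 2 - I.card - J.card) ![0, 0, 1]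

lemma length_gridSeparator {d : ℕ} {I J : Finset ℕ} (h : I.card + J.card ≤ d + 2) {q : ℕ × ℕ}
    (hq : q ∈ I ×ˢ J) : (gridSeparator d I J q).length = d := by
  obtain ⟨hq₁, hq₂⟩ := mem_product.1 hq
  have := card_pos.2 ⟨_, hq₁⟩
  have := card_pos.2 ⟨_, hq₂⟩
  simp only [gridSeparator, List.length_append, List.length_map, length_toList,
    card_erase_of_mem hq₁, card_erase_of_mem hq₂, List.length_replicate]
  omega

lemma prod_gridSeparator (d : ℕ) (I J : Finset ℕ) (q p : ℕ × ℕ) :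
    ((gridSeparator d I J q).map (· ⬝ᵥ gridVec p)).prod =
      (∏ i ∈ I.erase q.1, ((p.1 : ℂ) - i)) * ∏ j ∈ J.erase q.2, ((p.2 : ℂ) - j) := by
  simp [gridSeparator, gridVec, dotProduct, Fin.sum_univ_three, Function.comp_def,
    prod_map_toList, sub_eq_add_neg]

theorem linearIndepOn_gridVec_pow {d : ℕ} {I J : Finset ℕ} (h : I.card + J.card ≤ d + 2) :
    LinearIndepOn ℂ (fun q => linForm 2 (gridVec q) ^ d) (I ×ˢ J : Finset (ℕ × ℕ)) := by
  refine linearIndepOn_linForm_pow_of_separating d gridVec _ fun q hq => ?_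
  refine ⟨gridSeparator d I J q, length_gridSeparator h hq, ?_, fun p hp hpq => ?_⟩
  · rw [prod_gridSeparator]
    refine mul_ne_zero (prod_ne_zero_iff.2 fun i hi => ?_) (prod_ne_zero_iff.2 fun j hj => ?_) <;>
      rw [sub_ne_zero, Ne, Nat.cast_inj]
    exacts [(ne_of_mem_erase hi).symm, (ne_of_mem_erase hj).symm]
  · obtain ⟨hp₁, hp₂⟩ := mem_product.1 hp
    rw [prod_gridSeparator]
    by_cases h₁ : p.1 = q.1
    · have h₂ : p.2 ≠ q.2 := fun h₂ => hpq (Prod.ext h₁ h₂)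
      exact mul_eq_zero_of_right _ (prod_eq_zero (mem_erase.2 ⟨h₂, hp₂⟩) (sub_self _))
    · exact mul_eq_zero_of_left (prod_eq_zero (mem_erase.2 ⟨h₁, hp₁⟩) (sub_self _)) _

lemma card_image_gridPt (I J : Finset ℕ) : ((I ×ˢ J).image gridPt).card = I.card * J.card := by
  rw [card_image_of_injective _ gridPt_injective, card_product]

end Grid

theorem stmt13_general (e : ℕ) :
    ∃ (T : MvPolynomial (Fin 3) ℂ) (A B : Finset (Proj 2)),
      T ≠ 0 ∧ T.IsHomogeneous (4 * e + 1) ∧ A ∩ B = ∅ ∧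
      A.card = Nat.choose (2 * e + 2) 2 + e + 1 ∧
      B.card = Nat.choose (2 * e + 2) 2 + e + 1 ∧
      NRComputes 2 (4 * e + 1) A T ∧ NRComputes 2 (4 * e + 1) B T := by
  set m := 2 * e + 1
  set d := 4 * e + 1
  set c : ℕ × ℕ → ℂ := fun q => (altChoose m q.1 * altChoose m q.2 : ℤ)
  set J := range (m + 1)
  set T := ∑ q ∈ range (e + 1) ×ˢ J, c q • linForm 2 (gridVec q) ^ d
  have hT : T = ∑ q ∈ Ico (e + 1) (m + 1) ×ˢ J, (-c q) • linForm 2 (gridVec q) ^ d := by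
    have hrel := sum_altChoose_mul_smul_pow_eq_zero (m := m) (d := d) (by omega)
      (X 0 : MvPolynomial (Fin 3) ℂ) (X 1) (X 2)
    rw [← sum_range_add_sum_Ico _ (show e + 1 ≤ m + 1 by omega)] at hrel
    simp only [neg_smul, sum_neg_distrib, sum_product, T, c, Int.cast_smul_eq_zsmul,
      linForm_gridVec]
    exact eq_neg_of_add_eq_zero_left hrel
  have hc : ∀ I : Finset ℕ, (∀ i ∈ I, i ≤ m) → ∀ q ∈ I ×ˢ J, c q ≠ 0 := fun I hI q hq =>
    Int.cast_ne_zero.2 (mul_ne_zero (altChoose_ne_zero (hI _ (mem_product.1 hq).1))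
      (altChoose_ne_zero (by have := mem_range.1 (mem_product.1 hq).2; omega)))
  have hA := nrComputes_image_mk (d := d) gridVec gridVec_ne_zero (range (e + 1) ×ˢ J)
    (linearIndepOn_gridVec_pow (by simp [J]; omega)) c
    (hc _ fun i hi => by have := mem_range.1 hi; omega)
  have hB := nrComputes_image_mk (d := d) gridVec gridVec_ne_zero (Ico (e + 1) (m + 1) ×ˢ J)
    (linearIndepOn_gridVec_pow (by simp [J]; omega)) (-c)
    fun q hq => neg_ne_zero.2 (hc _ (fun i hi => by have := mem_Ico.1 hi; omega) q hq)
  have hcard : (e + 1) * (m + 1) = (2 * e + 2).choose 2 + e + 1 := by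
    rw [Nat.choose_two_right, show 2 * e + 2 - 1 = m by omega,
      show (2 * e + 2) * m = 2 * ((e + 1) * m) by ring, Nat.mul_div_cancel_left _ two_pos]
    ring
  refine ⟨T, (range (e + 1) ×ˢ J).image gridPt, (Ico (e + 1) (m + 1) ×ˢ J).image gridPt,
    hA.ne_zero ⟨gridPt (0, 0), mem_image_of_mem _ (by simp [J])⟩,
    isHomogeneous_sum_smul_linForm_pow _ _ _, ?_, ?_, ?_, hA, hT ▸ hB⟩
  · rw [← disjoint_iff_inter_eq_empty, disjoint_image gridPt_injective, disjoint_product,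
      range_eq_Ico]
    exact Or.inl (Ico_disjoint_Ico_consecutive _ _ _)
  · rw [card_image_gridPt, card_range, card_range, hcard]
  · rw [card_image_gridPt, Nat.card_Ico, card_range, ← hcard]
    congr 1
    omega

/-- Sharpness, `d ≡ 1 (mod 4)`: for `d = 4e+1`, `e ≥ 1`, there is a nonzero form of
degree `d` with two disjoint non-redundant decompositions of length
`binom(2e+2,2) + e + 1`. -/
theorem stmt13 (e : ℕ) (he : 1 ≤ e) :
    ∃ (T : MvPolynomial (Fin 3) ℂ) (A B : Finset (Proj 2)),
      T ≠ 0 ∧ T.IsHomogeneous (4 * e + 1) ∧ A ∩ B = ∅ ∧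
      A.card = Nat.choose (2 * e + 2) 2 + e + 1 ∧
      B.card = Nat.choose (2 * e + 2) 2 + e + 1 ∧
      NRComputes 2 (4 * e + 1) A T ∧ NRComputes 2 (4 * e + 1) B T :=
  stmt13_general e
end

section
/- For every integer e ≥ 1, setting d = 4e + 3 and r = binom(2e+3,2) + e + 1, there exist a nonzero ternary form T ∈ S^d ℂ³ and finite sets A, B ⊆ ℙ²(ℂ) with A ∩ B = ∅ and ℓ(A) = ℓ(B) = r, such that both A and B are non-redundant sets computing T. (In particular the bound r ≤ binom(m+2,2) + ⌊m/2⌋ in the identifiability criterion for odd-degree ternary forms is sharp when d ≡ 3 mod 4.) -/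
open MvPolynomial

namespace Stmt14Aux
open Finset

noncomputable section

lemma vand_ker {m : ℕ} {a : Fin m → ℂ} (ha : Function.Injective a) {u : Fin m → ℂ}
    (h : ∀ p : Fin m, ∑ i, u i * a i ^ (p : ℕ) = 0) : u = 0 :=
  Matrix.eq_zero_of_forall_pow_sum_mul_pow_eq_zero ha h

lemma exists_dual {m' : ℕ} {a : Fin (m' + 1) → ℂ} (ha : Function.Injective a) :
    ∃ u : Fin (m' + 1) → ℂ, (∀ i, u i ≠ 0) ∧ (∀ p < m', ∑ i, u i * a i ^ p = 0) ∧
      (∑ i, u i * a i ^ m' = 1) := by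
  classical
  set Φ : (Fin (m' + 1) → ℂ) →ₗ[ℂ] (Fin m' → ℂ) :=
    { toFun := fun u p => ∑ i, u i * a i ^ (p : ℕ)
      map_add' := by intro x y; funext p; simp [add_mul, Finset.sum_add_distrib]
      map_smul' := by intro c x; funext p; simp [Finset.mul_sum, mul_assoc] }
  have hker : ∃ u0 : Fin (m' + 1) → ℂ, u0 ≠ 0 ∧ Φ u0 = 0 := by
    by_contra hcon
    push_neg at hcon
    have hinj : Function.Injective Φ := by
      rw [← LinearMap.ker_eq_bot]
      rw [Submodule.eq_bot_iff]
      intro x hx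
      by_contra hx0
      exact (hcon x hx0) hx
    have := LinearMap.finrank_le_finrank_of_injective hinj
    simp [Module.finrank_pi] at this
  obtain ⟨u0, hu0, hΦ⟩ := hker
  have hmom : ∀ p < m', ∑ i, u0 i * a i ^ p = 0 := by
    intro p hp
    have := congrFun hΦ ⟨p, hp⟩
    simpa [Φ] using this
  have hs : (∑ i, u0 i * a i ^ m') ≠ 0 := by
    intro hs0
    apply hu0
    apply vand_ker ha
    intro p
    rcases lt_or_eq_of_le (Nat.lt_succ_iff.mp p.2) with h | h
    · exact hmom p h
    · rw [h]; exact hs0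
  have hnz : ∀ i, u0 i ≠ 0 := by
    intro i0 hi0
    apply hu0
    have h' : (fun j => u0 (i0.succAbove j)) = 0 := by
      apply vand_ker (ha.comp (Fin.succAbove_right_injective (p := i0)))
      intro p
      have hp : (p : ℕ) < m' := p.2
      have := hmom p hp
      rw [Fin.sum_univ_succAbove _ i0, hi0] at this
      simpa using this
    funext i
    rcases eq_or_ne i i0 with rfl | hne
    · exact hi0
    · obtain ⟨j, hj⟩ := Fin.exists_succAbove_eq hne
      rw [← hj]; exact congrFun h' j
  set s := ∑ i, u0 i * a i ^ m'
  refine ⟨fun i => s⁻¹ * u0 i, fun i => mul_ne_zero (inv_ne_zero hs) (hnz i), ?_, ?_⟩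
  · intro p hp
    simp only [mul_assoc, ← Finset.mul_sum]
    rw [hmom p hp, mul_zero]
  · simp only [mul_assoc, ← Finset.mul_sum]
    exact inv_mul_cancel₀ hs

def mu (d k p : ℕ) : Fin 3 →₀ ℕ :=
  Finsupp.single 0 p + Finsupp.single 1 (k - p) + Finsupp.single 2 (d - k)

lemma mu_apply0 (d k p : ℕ) : mu d k p 0 = p := by
  simp [mu, Finsupp.single_apply]
lemma mu_apply1 (d k p : ℕ) : mu d k p 1 = k - p := by
  simp [mu, Finsupp.single_apply]
lemma mu_apply2 (d k p : ℕ) : mu d k p 2 = d - k := by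
  simp [mu, Finsupp.single_apply]

lemma degree_eq_sum (f : Fin 3 →₀ ℕ) : f.degree = ∑ i : Fin 3, f i := by
  rw [Finsupp.degree]
  exact Finset.sum_subset (Finset.subset_univ _) (by
    intro x _ hx
    simpa using (Finsupp.notMem_support_iff.mp hx))

lemma mu_degree (d k p : ℕ) (hk : k ≤ d) (hp : p ≤ k) : (mu d k p).degree = d := by
  rw [degree_eq_sum, Fin.sum_univ_three, mu_apply0, mu_apply1, mu_apply2]
  omega

lemma mu_inj {d k p k' p' : ℕ} (hk : k ≤ d) (hp : p ≤ k) (hk' : k' ≤ d) (hp' : p' ≤ k')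
    (h : mu d k' p' = mu d k p) : k' = k ∧ p' = p := by
  have h0 := DFunLike.congr_fun h 0
  have h2 := DFunLike.congr_fun h 2
  simp only [mu_apply0, mu_apply2] at h0 h2
  omega

lemma mon_C (s : Fin 3 →₀ ℕ) (b a : ℂ) :
    (monomial s b : MvPolynomial (Fin 3) ℂ) * C a = monomial s (a * b) := by
  rw [mul_comm, C_mul_monomial]

lemma trinom_pow (x y : ℂ) (d : ℕ) :
    (C x * X 0 + C y * X 1 + X 2 : MvPolynomial (Fin 3) ℂ) ^ d =
    ∑ k ∈ range (d+1), ∑ p ∈ range (k+1),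
      monomial (mu d k p) (x ^ p * y ^ (k - p) * (d.choose k) * (k.choose p)) := by
  rw [add_pow]
  refine Finset.sum_congr rfl fun k hk => ?_
  rw [add_pow, Finset.sum_mul, Finset.sum_mul]
  refine Finset.sum_congr rfl fun p hp => ?_
  rw [mul_pow, mul_pow, ← C_pow, ← C_pow, X_pow_eq_monomial, X_pow_eq_monomial, X_pow_eq_monomial,
    ← map_natCast (C (σ := Fin 3) (R := ℂ)) (k.choose p),
    ← map_natCast (C (σ := Fin 3) (R := ℂ)) (d.choose k)]
  simp only [C_mul_monomial, mon_C, monomial_mul, mul_one, one_mul]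
  rw [monomial_eq_monomial_iff]
  left
  constructor
  · simp [mu, add_comm, add_assoc, add_left_comm]
  · ring

section
variable {ι : Type*} [Fintype ι] (f g c : ι → ℂ) (d : ℕ)

def Rsum : MvPolynomial (Fin 3) ℂ :=
  ∑ s : ι, c s • (C (f s) * X 0 + C (g s) * X 1 + X 2) ^ d

lemma Rsum_eq : Rsum f g c d = ∑ k ∈ range (d+1), ∑ p ∈ range (k+1),
    monomial (mu d k p) ((d.choose k) * (k.choose p) * ∑ s, c s * f s ^ p * g s ^ (k-p)) := by
  unfold Rsum
  simp_rw [trinom_pow, Finset.smul_sum, smul_monomial]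
  rw [Finset.sum_comm]
  refine Finset.sum_congr rfl fun k hk => ?_
  rw [Finset.sum_comm]
  refine Finset.sum_congr rfl fun p hp => ?_
  rw [← map_sum (monomial (mu d k p))]
  congr 1
  rw [Finset.mul_sum]
  exact Finset.sum_congr rfl fun s _ => by simp only [smul_eq_mul]; ring

lemma Rsum_zero_iff : Rsum f g c d = 0 ↔
    ∀ k ≤ d, ∀ p ≤ k, ∑ s, c s * f s ^ p * g s ^ (k-p) = 0 := by
  rw [Rsum_eq]
  constructor
  · intro h k hk p hp
    have hc := congrArg (coeff (mu d k p)) h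
    rw [coeff_zero] at hc
    rw [coeff_sum] at hc
    rw [Finset.sum_eq_single k] at hc
    rotate_left
    · intro k' hk' hne
      rw [coeff_sum]
      apply Finset.sum_eq_zero
      intro p' hp'
      rw [coeff_monomial, if_neg]
      intro heq
      exact hne (mu_inj hk hp (Nat.lt_succ_iff.mp (by simpa using hk'))
        (Nat.lt_succ_iff.mp (by simpa using hp')) heq).1
    · intro hkk; exact absurd (Finset.mem_range.mpr (Nat.lt_succ_of_le hk)) hkk
    rw [coeff_sum, Finset.sum_eq_single p] at hc
    rotate_left
    · intro p' hp' hne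
      rw [coeff_monomial, if_neg]
      intro heq
      exact hne (mu_inj hk hp hk (Nat.lt_succ_iff.mp (by simpa using hp')) heq).2
    · intro hpp; exact absurd (Finset.mem_range.mpr (Nat.lt_succ_of_le hp)) hpp
    rw [coeff_monomial, if_pos rfl] at hc
    have h1 : ((d.choose k : ℂ)) ≠ 0 := Nat.cast_ne_zero.mpr (Nat.choose_pos hk).ne'
    have h2 : ((k.choose p : ℂ)) ≠ 0 := Nat.cast_ne_zero.mpr (Nat.choose_pos hp).ne'
    rw [mul_assoc, mul_eq_zero] at hc
    rcases hc with hc | hc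
    · exact absurd hc h1
    rcases mul_eq_zero.mp hc with hc | hc
    · exact absurd hc h2
    · exact hc
  · intro h
    apply Finset.sum_eq_zero
    intro k hk
    apply Finset.sum_eq_zero
    intro p hp
    rw [h k (Nat.lt_succ_iff.mp (Finset.mem_range.mp hk))
        p (Nat.lt_succ_iff.mp (Finset.mem_range.mp hp)), mul_zero, monomial_zero]

lemma Rsum_homog : (Rsum f g c d).IsHomogeneous d := by
  rw [Rsum_eq]
  apply IsHomogeneous.sum
  intro k hk
  apply IsHomogeneous.sum
  intro p hp
  exact isHomogeneous_monomial _
    (mu_degree d k p (Nat.lt_succ_iff.mp (Finset.mem_range.mp hk))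
      (Nat.lt_succ_iff.mp (Finset.mem_range.mp hp)))

lemma Rsum_sub (c' : ι → ℂ) :
    Rsum f g c d - Rsum f g c' d = Rsum f g (fun s => c s - c' s) d := by
  unfold Rsum
  rw [← Finset.sum_sub_distrib]
  exact Finset.sum_congr rfl fun s _ => (sub_smul _ _ _).symm

end

lemma prod_moment {m n : ℕ} (u : Fin m → ℂ) (w : Fin n → ℂ) (a : Fin m → ℂ) (b : Fin n → ℂ)
    (p q : ℕ) :
    ∑ s : Fin m × Fin n, (u s.1 * w s.2) * a s.1 ^ p * b s.2 ^ q
      = (∑ i, u i * a i ^ p) * (∑ j, w j * b j ^ q) := by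
  rw [Finset.sum_mul_sum, Fintype.sum_prod_type]
  exact Finset.sum_congr rfl fun i _ => Finset.sum_congr rfl fun j _ => by ring

lemma rel_unique {m' n' : ℕ} {a : Fin (m'+1) → ℂ} {b : Fin (n'+1) → ℂ}
    (ha : Function.Injective a) (hb : Function.Injective b)
    {u : Fin (m'+1) → ℂ} {w : Fin (n'+1) → ℂ}
    (hu0 : ∀ p < m', ∑ i, u i * a i ^ p = 0) (hu1 : ∑ i, u i * a i ^ m' = 1)
    (hw0 : ∀ q < n', ∑ j, w j * b j ^ q = 0) (hw1 : ∑ j, w j * b j ^ n' = 1)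
    {c : Fin (m'+1) × Fin (n'+1) → ℂ}
    (hc : ∀ p ≤ m', ∀ q ≤ n', ¬(p = m' ∧ q = n') →
      ∑ s : Fin (m'+1) × Fin (n'+1), c s * a s.1 ^ p * b s.2 ^ q = 0) :
    ∀ s, c s = (∑ s' : Fin (m'+1) × Fin (n'+1), c s' * a s'.1 ^ m' * b s'.2 ^ n')
      * u s.1 * w s.2 := by
  set t := ∑ s' : Fin (m'+1) × Fin (n'+1), c s' * a s'.1 ^ m' * b s'.2 ^ n' with ht
  set h : Fin (m'+1) × Fin (n'+1) → ℂ := fun s => c s - t * u s.1 * w s.2 with hh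
  have hbox : ∀ p ≤ m', ∀ q ≤ n',
      ∑ s : Fin (m'+1) × Fin (n'+1), h s * a s.1 ^ p * b s.2 ^ q = 0 := by
    intro p hp q hq
    have expand : ∑ s : Fin (m'+1) × Fin (n'+1), h s * a s.1 ^ p * b s.2 ^ q
        = (∑ s : Fin (m'+1) × Fin (n'+1), c s * a s.1 ^ p * b s.2 ^ q)
          - t * ((∑ i, u i * a i ^ p) * (∑ j, w j * b j ^ q)) := by
      rw [← prod_moment u w a b p q, Finset.mul_sum, ← Finset.sum_sub_distrib]
      exact Finset.sum_congr rfl fun s _ => by simp only [hh]; ring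
    rw [expand]
    by_cases hcorner : p = m' ∧ q = n'
    · obtain ⟨rfl, rfl⟩ := hcorner
      rw [hu1, hw1, ← ht]
      ring
    · rw [hc p hp q hq hcorner]
      rcases Nat.lt_or_ge p m' with hp' | hp'
      · rw [hu0 p hp']; ring
      · have : q < n' := by
          rcases Nat.lt_or_ge q n' with h' | h'
          · exact h'
          · exact absurd ⟨le_antisymm hp hp', le_antisymm hq h'⟩ hcorner
        rw [hw0 q this]; ring
  have hrow : ∀ j, ∀ p ≤ m', ∑ i, h (i, j) * a i ^ p = 0 := by
    intro j p hp
    have key : (fun j => ∑ i, h (i, j) * a i ^ p) = 0 := by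
      apply vand_ker hb
      intro q
      have := hbox p hp q (Nat.lt_succ_iff.mp q.2)
      rw [Fintype.sum_prod_type_right] at this
      calc ∑ j', (∑ i, h (i, j') * a i ^ p) * b j' ^ (q : ℕ)
          = ∑ j', ∑ i, h (i, j') * a i ^ p * b j' ^ (q : ℕ) :=
            Finset.sum_congr rfl fun j' _ => by rw [Finset.sum_mul]
        _ = 0 := this
    exact congrFun key j
  intro s
  have hcol : (fun i => h (i, s.2)) = 0 := by
    apply vand_ker ha
    intro p
    exact hrow s.2 p (Nat.lt_succ_iff.mp p.2)
  have h0 := congrFun hcol s.1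
  simp only [hh, Pi.zero_apply] at h0
  have : c (s.1, s.2) - t * u s.1 * w s.2 = 0 := h0
  rw [Prod.mk.eta] at this
  linear_combination this

lemma span_extract {ι : Type*} [Fintype ι] {M : Type*} [AddCommGroup M] [Module ℂ M]
    (v : ι → M) (X : Set ι) {T : M} (h : T ∈ Submodule.span ℂ (v '' X)) :
    ∃ l : ι → ℂ, (∀ s ∉ X, l s = 0) ∧ T = ∑ s, l s • v s := by
  classical
  rw [Finsupp.mem_span_image_iff_linearCombination] at h
  obtain ⟨l, hl, hT⟩ := h
  refine ⟨fun s => l s, fun s hs => ?_, ?_⟩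
  · by_contra h0
    exact hs (hl (Finsupp.mem_support_iff.mpr h0))
  · rw [← hT, Finsupp.linearCombination_apply, Finsupp.sum_fintype]
    intro i; simp

end

end Stmt14Aux

open Finset

/-- Sharpness, `d ≡ 3 (mod 4)`: for `d = 4e+3`, `e ≥ 1`, there is a nonzero form of
degree `d` with two disjoint non-redundant decompositions of length
`binom(2e+3,2) + e + 1`. -/
theorem stmt14 (e : ℕ) (he : 1 ≤ e) :
    ∃ (T : MvPolynomial (Fin 3) ℂ) (A B : Finset (Proj 2)),
      T ≠ 0 ∧ T.IsHomogeneous (4 * e + 3) ∧ A ∩ B = ∅ ∧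
      A.card = Nat.choose (2 * e + 3) 2 + e + 1 ∧
      B.card = Nat.choose (2 * e + 3) 2 + e + 1 ∧
      NRComputes 2 (4 * e + 3) A T ∧ NRComputes 2 (4 * e + 3) B T := by
  classical
  set d := 4 * e + 3 with hd
  set av : Fin (2*e+1+1) → ℂ := (fun i => ((i : ℕ) : ℂ)) with hav
  set bv : Fin (2*e+3+1) → ℂ := (fun j => ((j : ℕ) : ℂ)) with hbv
  have ha : Function.Injective av := fun i j h =>
    Fin.ext ((Nat.cast_injective : Function.Injective (Nat.cast : ℕ → ℂ)) (by simpa [hav] using h))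
  have hb : Function.Injective bv := fun i j h =>
    Fin.ext ((Nat.cast_injective : Function.Injective (Nat.cast : ℕ → ℂ)) (by simpa [hbv] using h))
  obtain ⟨u, hu, hu0, hu1⟩ := Stmt14Aux.exists_dual ha
  obtain ⟨w, hw, hw0, hw1⟩ := Stmt14Aux.exists_dual hb
  set vvec : Fin (2*e+1+1) × Fin (2*e+3+1) → (Fin 3 → ℂ) :=
    fun s => ![av s.1, bv s.2, 1] with hvvec
  have hvnz : ∀ s, vvec s ≠ 0 := by
    intro s h
    have := congrFun h 2
    simp [hvvec] at this
  set Pf : Fin (2*e+1+1) × Fin (2*e+3+1) → Proj 2 :=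
    fun s => Projectivization.mk ℂ (vvec s) (hvnz s) with hPf
  have hPinj : Function.Injective Pf := by
    intro s s' h
    simp only [hPf] at h
    rw [Projectivization.mk_eq_mk_iff'] at h
    obtain ⟨μ, hμ⟩ := h
    have h2 := congrFun hμ 2
    have h0 := congrFun hμ 0
    have h1 := congrFun hμ 1
    simp only [hvvec, Pi.smul_apply, smul_eq_mul, Matrix.cons_val_zero, Matrix.cons_val_one,
      Matrix.head_cons, Matrix.cons_val_two, Matrix.tail_cons] at h0 h1 h2
    rw [mul_one] at h2
    rw [h2, one_mul] at h0 h1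
    exact Prod.ext (ha h0).symm (hb h1).symm
  have hlamex : ∀ s, ∃ μ : ℂˣ, (Pf s).rep = (μ : ℂ) • vvec s := by
    intro s
    obtain ⟨μ, hμ⟩ := Projectivization.exists_smul_eq_mk_rep ℂ (vvec s) (hvnz s)
    exact ⟨μ, by rw [← hμ, Units.smul_def]⟩
  choose lam hlam using hlamex
  set Lf : Fin (2*e+1+1) × Fin (2*e+3+1) → MvPolynomial (Fin 3) ℂ :=
    fun s => MvPolynomial.C (av s.1) * MvPolynomial.X 0 + MvPolynomial.C (bv s.2) *
      MvPolynomial.X 1 + MvPolynomial.X 2 with hLf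
  have hlin : ∀ s, linForm 2 ((Pf s).rep) = MvPolynomial.C ((lam s : ℂ)) * Lf s := by
    intro s
    rw [linForm, Fin.sum_univ_three, hlam s]
    simp only [hvvec, hLf, Pi.smul_apply, smul_eq_mul, Matrix.cons_val_zero, Matrix.cons_val_one,
      Matrix.head_cons, Matrix.cons_val_two, Matrix.tail_cons, map_mul, map_one]
    ring
  have hvero : ∀ s, vero 2 d (Pf s) = ((lam s : ℂ))^d • (Lf s)^d := by
    intro s
    rw [vero, hlin s, mul_pow, ← MvPolynomial.C_pow, ← MvPolynomial.smul_eq_C_mul]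
  have key : ∀ cc : Fin (2*e+1+1) × Fin (2*e+3+1) → ℂ,
      (∑ s, cc s • vero 2 d (Pf s))
      = Stmt14Aux.Rsum (fun s => av s.1) (fun s => bv s.2)
          (fun s => cc s * (lam s : ℂ)^d) d := by
    intro cc
    rw [Stmt14Aux.Rsum]
    refine Finset.sum_congr rfl fun s _ => ?_
    rw [hvero s, smul_smul]
  have key2 : ∀ cc : Fin (2*e+1+1) × Fin (2*e+3+1) → ℂ,
      Stmt14Aux.Rsum (fun s => av s.1) (fun s => bv s.2) cc d
      = ∑ s, (cc s * ((lam s : ℂ)^d)⁻¹) • vero 2 d (Pf s) := by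
    intro cc
    have hfix : (fun s => cc s * ((lam s : ℂ)^d)⁻¹ * (lam s : ℂ)^d) = cc := funext fun s => by
      rw [mul_assoc, inv_mul_cancel₀ (pow_ne_zero _ (Units.ne_zero _)), mul_one]
    rw [key (fun s => cc s * ((lam s : ℂ)^d)⁻¹), hfix]
  have hfull : Stmt14Aux.Rsum (fun s => av s.1) (fun s => bv s.2)
      (fun s : Fin (2*e+1+1) × Fin (2*e+3+1) => u s.1 * w s.2) d = 0 := by
    rw [Stmt14Aux.Rsum_zero_iff]
    intro k hk p hp
    rw [Stmt14Aux.prod_moment]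
    rcases Nat.lt_or_ge p (2*e+1) with h' | h'
    · rw [hu0 p h', zero_mul]
    · rw [hw0 (k-p) (by omega), mul_zero]
  have getrel : ∀ c0 : Fin (2*e+1+1) × Fin (2*e+3+1) → ℂ,
      Stmt14Aux.Rsum (fun s => av s.1) (fun s => bv s.2) c0 d = 0 →
      ∃ t : ℂ, ∀ s, c0 s = t * u s.1 * w s.2 := by
    intro c0 h0
    refine ⟨(∑ s' : Fin (2*e+1+1) × Fin (2*e+3+1), c0 s' * av s'.1 ^ (2*e+1) * bv s'.2 ^ (2*e+3)), ?_⟩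
    apply Stmt14Aux.rel_unique ha hb hu0 hu1 hw0 hw1
    intro p hp q hq hcorner
    have hle : p + q ≤ d := by omega
    have := (Stmt14Aux.Rsum_zero_iff _ _ _ _).mp h0 (p+q) hle p (by omega)
    rw [Nat.add_sub_cancel_left] at this
    exact this
  have hmul : ∀ (s : Fin (2*e+1+1) × Fin (2*e+3+1)) (x : ℂ),
      x * u s.1 * w s.2 = 0 → x = 0 := by
    intro s x hx
    rcases mul_eq_zero.mp hx with hx | hx
    · rcases mul_eq_zero.mp hx with hx | hx
      · exact hx
      · exact absurd hx (hu _)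
    · exact absurd hx (hw _)
  -- index sets and coefficients
  set SA : Finset (Fin (2*e+1+1) × Fin (2*e+3+1)) :=
    (univ.filter (fun i : Fin (2*e+1+1) => (i : ℕ) ≤ e)) ×ˢ univ with hSA
  set SB : Finset (Fin (2*e+1+1) × Fin (2*e+3+1)) :=
    (univ.filter (fun i : Fin (2*e+1+1) => ¬ (i : ℕ) ≤ e)) ×ˢ univ with hSB
  have hSAmem : ∀ s, s ∈ SA ↔ (s.1 : ℕ) ≤ e := by
    intro s; simp [hSA, Finset.mem_product]
  have hSBmem : ∀ s, s ∈ SB ↔ ¬ (s.1 : ℕ) ≤ e := by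
    intro s; simp [hSB, Finset.mem_product]
  set cA : Fin (2*e+1+1) × Fin (2*e+3+1) → ℂ :=
    fun s => if (s.1 : ℕ) ≤ e then u s.1 * w s.2 else 0 with hcA
  set cB : Fin (2*e+1+1) × Fin (2*e+3+1) → ℂ :=
    fun s => if (s.1 : ℕ) ≤ e then 0 else -(u s.1 * w s.2) with hcB
  set T := Stmt14Aux.Rsum (fun s => av s.1) (fun s => bv s.2) cA d with hT
  have hTB : T = Stmt14Aux.Rsum (fun s => av s.1) (fun s => bv s.2) cB d := by
    have hsub := Stmt14Aux.Rsum_sub (fun s => av s.1) (fun s => bv s.2) cA d cB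
    have hdiff : (fun s => cA s - cB s) = fun s => u s.1 * w s.2 := by
      funext s; by_cases h : (s.1 : ℕ) ≤ e <;> simp [hcA, hcB, h]
    rw [hdiff, hfull, ← hT] at hsub
    exact sub_eq_zero.mp hsub
  set A : Finset (Proj 2) := SA.image Pf with hA
  set B : Finset (Proj 2) := SB.image Pf with hB
  set sOut : Fin (2*e+1+1) × Fin (2*e+3+1) := (⟨e+1, by omega⟩, ⟨0, by omega⟩) with hsOut
  set sIn : Fin (2*e+1+1) × Fin (2*e+3+1) := (⟨0, by omega⟩, ⟨0, by omega⟩) with hsIn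
  have hsOutA : ¬ ((sOut.1 : ℕ) ≤ e) := by simp [hsOut]
  have hsInA : ((sIn.1 : ℕ) ≤ e) := by simp [hsIn]
  -- T ≠ 0
  have hTne : T ≠ 0 := by
    intro h0
    obtain ⟨t, hrel⟩ := getrel cA h0
    have h2 := hrel sOut
    have h1 := hrel sIn
    rw [hcA] at h1 h2
    simp only [hsOutA, if_false, hsInA, if_true] at h1 h2
    have ht0 := hmul sOut t h2.symm
    rw [ht0, zero_mul, zero_mul] at h1
    exact mul_ne_zero (hu _) (hw _) h1
  -- computability
  have hcompA : Computes 2 d A T := by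
    rw [Computes, hT, key2 cA]
    apply Submodule.sum_mem
    intro s _
    by_cases hse : (s.1 : ℕ) ≤ e
    · apply Submodule.smul_mem
      apply Submodule.subset_span
      exact Set.mem_image_of_mem _ (Finset.mem_coe.mpr
        (Finset.mem_image_of_mem Pf ((hSAmem s).mpr hse)))
    · have hz : cA s = 0 := by simp [hcA, hse]
      rw [hz, zero_mul, zero_smul]
      exact Submodule.zero_mem _
  have hcompB : Computes 2 d B T := by
    rw [Computes, hTB, key2 cB]
    apply Submodule.sum_mem
    intro s _
    by_cases hse : (s.1 : ℕ) ≤ e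
    · have hz : cB s = 0 := by simp [hcB, hse]
      rw [hz, zero_mul, zero_smul]
      exact Submodule.zero_mem _
    · apply Submodule.smul_mem
      apply Submodule.subset_span
      exact Set.mem_image_of_mem _ (Finset.mem_coe.mpr
        (Finset.mem_image_of_mem Pf ((hSBmem s).mpr hse)))
  -- non-redundancy
  have hnr : ∀ (S : Finset (Fin (2*e+1+1) × Fin (2*e+3+1))) (cS : _ → ℂ),
      T = Stmt14Aux.Rsum (fun s => av s.1) (fun s => bv s.2) cS d →
      (∀ s ∉ S, cS s = 0) →
      (∃ sext, sext ∉ S ∧ cS sext = 0) →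
      True := fun _ _ _ _ _ => trivial
  have hnrA : ∀ A' ⊂ A, ¬ Computes 2 d A' T := by
    intro A' hss hcomp
    obtain ⟨P0, hP0A, hP0A'⟩ := Finset.exists_of_ssubset hss
    obtain ⟨s0, hs0SA, hPs0⟩ := Finset.mem_image.mp (hA ▸ hP0A)
    have hsubset : A' ⊆ A.erase P0 := fun x hx =>
      Finset.mem_erase.mpr ⟨fun hxx => hP0A' (hxx ▸ hx), hss.subset hx⟩
    have hTmem : T ∈ Submodule.span ℂ ((fun s => vero 2 d (Pf s)) '' ↑(SA.erase s0)) := by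
      have h1 : T ∈ Submodule.span ℂ (vero 2 d '' ↑(A.erase P0)) :=
        Submodule.span_mono (Set.image_mono (Finset.coe_subset.mpr hsubset)) hcomp
      rw [hA, ← hPs0, ← Finset.image_erase hPinj, Finset.coe_image, Set.image_image] at h1
      exact h1
    obtain ⟨l, hlsupp, hTl⟩ := Stmt14Aux.span_extract _ _ hTmem
    rw [key l] at hTl
    have h0 : Stmt14Aux.Rsum (fun s => av s.1) (fun s => bv s.2)
        (fun s => cA s - l s * (lam s : ℂ)^d) d = 0 := by
      rw [← Stmt14Aux.Rsum_sub, ← hT, ← hTl, sub_self]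
    obtain ⟨t, hrel⟩ := getrel _ h0
    have hl0 : l s0 = 0 := hlsupp s0 (by simp)
    have hlOut : l sOut = 0 := by
      apply hlsupp
      intro hmem
      rw [Finset.mem_coe, Finset.mem_erase] at hmem
      exact hsOutA ((hSAmem sOut).mp hmem.2)
    have h2 := hrel sOut
    have h1 := hrel s0
    simp only [hcA, hsOutA, if_false, (hSAmem s0).mp hs0SA, if_true, hlOut, hl0,
      zero_mul, sub_zero, zero_sub, neg_eq_zero] at h1 h2
    have ht0 := hmul sOut t (by linear_combination -h2)
    rw [ht0, zero_mul, zero_mul] at h1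
    exact mul_ne_zero (hu _) (hw _) h1
  have hnrB : ∀ B' ⊂ B, ¬ Computes 2 d B' T := by
    intro B' hss hcomp
    obtain ⟨P0, hP0B, hP0B'⟩ := Finset.exists_of_ssubset hss
    obtain ⟨s0, hs0SB, hPs0⟩ := Finset.mem_image.mp (hB ▸ hP0B)
    have hsubset : B' ⊆ B.erase P0 := fun x hx =>
      Finset.mem_erase.mpr ⟨fun hxx => hP0B' (hxx ▸ hx), hss.subset hx⟩
    have hTmem : T ∈ Submodule.span ℂ ((fun s => vero 2 d (Pf s)) '' ↑(SB.erase s0)) := by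
      have h1 : T ∈ Submodule.span ℂ (vero 2 d '' ↑(B.erase P0)) :=
        Submodule.span_mono (Set.image_mono (Finset.coe_subset.mpr hsubset)) hcomp
      rw [hB, ← hPs0, ← Finset.image_erase hPinj, Finset.coe_image, Set.image_image] at h1
      exact h1
    obtain ⟨l, hlsupp, hTl⟩ := Stmt14Aux.span_extract _ _ hTmem
    rw [key l] at hTl
    have h0 : Stmt14Aux.Rsum (fun s => av s.1) (fun s => bv s.2)
        (fun s => cB s - l s * (lam s : ℂ)^d) d = 0 := by
      rw [← Stmt14Aux.Rsum_sub, ← hTB, ← hTl, sub_self]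
    obtain ⟨t, hrel⟩ := getrel _ h0
    have hl0 : l s0 = 0 := hlsupp s0 (by simp)
    have hlIn : l sIn = 0 := by
      apply hlsupp
      intro hmem
      rw [Finset.mem_coe, Finset.mem_erase] at hmem
      exact (hSBmem sIn).mp hmem.2 hsInA
    have h2 := hrel sIn
    have h1 := hrel s0
    have hs0e : ¬ ((s0.1 : ℕ) ≤ e) := (hSBmem s0).mp hs0SB
    simp only [hcB, hsInA, if_true, hs0e, if_false, hlIn, hl0, zero_mul, sub_zero,
      zero_sub] at h1 h2
    have ht0 := hmul sIn t (by linear_combination -h2)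
    rw [ht0, zero_mul, zero_mul] at h1
    have : u s0.1 * w s0.2 = 0 := by linear_combination -h1
    exact mul_ne_zero (hu _) (hw _) this
  -- cardinalities
  have hSAfcard : (univ.filter (fun i : Fin (2*e+1+1) => (i : ℕ) ≤ e)).card = e+1 := by
    have heq : (univ.filter (fun i : Fin (2*e+1+1) => (i : ℕ) ≤ e))
        = (univ : Finset (Fin (e+1))).image (Fin.castLE (by omega)) := by
      ext i
      simp only [Finset.mem_filter, Finset.mem_univ, true_and, Finset.mem_image]
      constructor
      · intro hi
        exact ⟨⟨(i : ℕ), by omega⟩, by ext; simp⟩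
      · rintro ⟨j, -, rfl⟩
        simpa using (by omega : (j : ℕ) ≤ e)
    rw [heq, Finset.card_image_of_injective _ (Fin.castLE_injective _), card_univ,
      Fintype.card_fin]
  have hSBfcard : (univ.filter (fun i : Fin (2*e+1+1) => ¬ (i : ℕ) ≤ e)).card = e+1 := by
    have hsum := Finset.card_filter_add_card_filter_not
      (s := (univ : Finset (Fin (2*e+1+1)))) (p := fun i => (i : ℕ) ≤ e)
    rw [hSAfcard, card_univ, Fintype.card_fin] at hsum
    omega
  have hchoose : Nat.choose (2*e+3) 2 + e + 1 = (e+1) * (2*e+3+1) := by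
    rw [Nat.choose_two_right]
    rw [show 2*e+3-1 = 2*e+2 from by omega]
    rw [show (2*e+3)*(2*e+2) = ((2*e+3)*(e+1))*2 from by ring]
    rw [Nat.mul_div_cancel _ (by norm_num : 0 < 2)]
    ring
  have hAcard : A.card = Nat.choose (2*e+3) 2 + e + 1 := by
    rw [hA, Finset.card_image_of_injective _ hPinj, hSA, Finset.card_product, hSAfcard,
      card_univ, Fintype.card_fin, hchoose]
  have hBcard : B.card = Nat.choose (2*e+3) 2 + e + 1 := by
    rw [hB, Finset.card_image_of_injective _ hPinj, hSB, Finset.card_product, hSBfcard,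
      card_univ, Fintype.card_fin, hchoose]
  -- disjointness
  have hdisj : A ∩ B = ∅ := by
    rw [← Finset.disjoint_iff_inter_eq_empty, Finset.disjoint_left]
    intro x hxA hxB
    obtain ⟨s, hs, rfl⟩ := Finset.mem_image.mp hxA
    obtain ⟨s', hs', heq⟩ := Finset.mem_image.mp hxB
    have := hPinj heq
    rw [this] at hs'
    exact (hSBmem s).mp hs' ((hSAmem s).mp hs)
  exact ⟨T, A, B, hTne, hT ▸ Stmt14Aux.Rsum_homog _ _ _ _, hdisj, hAcard, hBcard,
    ⟨hcompA, hnrA⟩, ⟨hcompB, hnrB⟩⟩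
end

section
/- For every integer m ≥ 5, setting d = 2m, there exist a nonzero ternary form T ∈ S^d ℂ³ and finite sets A, B ⊆ ℙ²(ℂ) such that A is a non-redundant set computing T with ℓ(A) = binom(m+2,2) + 1 and B is a non-redundant set computing T with ℓ(B) = binom(m+2,2) − 1. (In particular the bound r ≤ binom(m+2,2) in the rank criterion for even-degree ternary forms is sharp.) -/
open MvPolynomial

noncomputable section AuxAll
open Finset

lemma mono3 (a i j : ℕ) :
    (MvPolynomial.X 0 ^ a * MvPolynomial.X 1 ^ i * MvPolynomial.X 2 ^ j : MvPolynomial (Fin 3) ℂ)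
      = monomial (Finsupp.single 0 a + Finsupp.single 1 i + Finsupp.single 2 j) 1 := by
  rw [X_pow_eq_monomial, X_pow_eq_monomial, X_pow_eq_monomial, monomial_mul, monomial_mul]
  simp

section Aux

abbrev R3 := MvPolynomial (Fin 3) ℂ

lemma linForm_three (v : Fin 3 → ℂ) :
    linForm 2 v = C (v 0) * X 0 + C (v 1) * X 1 + C (v 2) * X 2 := by
  simp [linForm, Fin.sum_univ_three]

lemma linForm_bin (t : ℂ) : linForm 2 ![1, t, 0] = X 0 + C t * X 1 := by
  rw [linForm_three]; simp

lemma linForm_smul_s15 (c : ℂ) (v : Fin 3 → ℂ) :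
    linForm 2 (c • v) = C c * linForm 2 v := by
  simp only [linForm_three, Pi.smul_apply, smul_eq_mul, map_mul]
  ring

lemma linForm_isHomog (v : Fin 3 → ℂ) : (linForm 2 v).IsHomogeneous 1 := by
  apply MvPolynomial.IsHomogeneous.sum
  intro i _
  simpa using (MvPolynomial.isHomogeneous_X ℂ i).C_mul (v i)

lemma vero_isHomog (d : ℕ) (P : Proj 2) : (vero 2 d P).IsHomogeneous d := by
  simpa [vero] using (linForm_isHomog P.rep).pow d

lemma bin_nonzero (t : ℂ) : (![1, t, 0] : Fin 3 → ℂ) ≠ 0 := by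
  intro h
  have := congrFun h 0
  simp at this

/-- Every Veronese point of `mk v` is a nonzero multiple of `(linForm v)^d`. -/
lemma vero_mk (d : ℕ) (v : Fin 3 → ℂ) (hv : v ≠ 0) :
    ∃ c : ℂ, c ≠ 0 ∧ vero 2 d (Projectivization.mk ℂ v hv) = c • (linForm 2 v) ^ d := by
  set P := Projectivization.mk ℂ v hv with hP
  have h1 : Projectivization.mk ℂ P.rep P.rep_nonzero = Projectivization.mk ℂ v hv :=
    by rw [Projectivization.mk_rep]
  rw [Projectivization.mk_eq_mk_iff] at h1
  obtain ⟨a, ha⟩ := h1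
  refine ⟨(a : ℂ) ^ d, pow_ne_zero _ a.ne_zero, ?_⟩
  have : linForm 2 P.rep = C (a : ℂ) * linForm 2 v := by
    rw [← ha, Units.smul_def, linForm_smul_s15]
  rw [vero, this, mul_pow, ← C_pow, ← smul_eq_C_mul]

end Aux

section Aux2
open Finset

lemma abc_nonzero (a b : ℂ) : (![1, a, b] : Fin 3 → ℂ) ≠ 0 := by
  intro h
  have := congrFun h 0
  simp at this

lemma linForm_abc (a b : ℂ) :
    linForm 2 ![1, a, b] = X 0 + C a * X 1 + C b * X 2 := by
  rw [linForm_three]; simp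

lemma coeff_binpow (d K : ℕ) (hK : K ≤ d) (t : ℂ) :
    MvPolynomial.coeff (Finsupp.single 0 K + Finsupp.single 1 (d - K))
      ((X 0 + C t * X 1 : MvPolynomial (Fin 3) ℂ) ^ d)
      = (d.choose K : ℂ) * t ^ (d - K) := by
  rw [add_pow, coeff_sum]
  have hterm : ∀ k ∈ range (d+1),
      MvPolynomial.coeff (Finsupp.single 0 K + Finsupp.single 1 (d - K))
        ((X 0 : MvPolynomial (Fin 3) ℂ) ^ k * (C t * X 1) ^ (d - k) * (d.choose k : MvPolynomial (Fin 3) ℂ))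
      = if k = K then (d.choose K : ℂ) * t ^ (d - K) else 0 := by
    intro k hk
    have hmon : (X 0 : MvPolynomial (Fin 3) ℂ) ^ k * (C t * X 1) ^ (d - k) * (d.choose k : MvPolynomial (Fin 3) ℂ)
        = monomial (Finsupp.single 0 k + Finsupp.single 1 (d - k)) (t ^ (d - k) * (d.choose k : ℂ)) := by
      have hc : ((d.choose k : ℕ) : MvPolynomial (Fin 3) ℂ) = C ((d.choose k : ℕ) : ℂ) := by simp
      rw [mul_pow, ← C_pow, X_pow_eq_monomial, X_pow_eq_monomial, hc, C_apply, C_apply]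
      simp only [monomial_mul]
      congr 1
      · abel_nf
      · ring
    rw [hmon, coeff_monomial]
    by_cases hkK : k = K
    · subst hkK
      simp [mul_comm]
    · rw [if_neg, if_neg hkK]
      intro h
      apply hkK
      have := DFunLike.congr_fun h (0 : Fin 3)
      simpa using this
  rw [Finset.sum_congr rfl hterm, Finset.sum_ite_eq' (range (d+1)) K
    (fun _ => (d.choose K : ℂ) * t ^ (d - K)), if_pos (mem_range.2 (by omega))]


/-- Power sums criterion: if a combination of `d`-th powers of distinct binary
linear forms vanishes (at most `d+1` of them), all coefficients vanish. -/


lemma li_binpow (d : ℕ) (S : Finset ℕ) (t : ℕ → ℂ) (hinj : Set.InjOn t S)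
    (hcard : S.card ≤ d + 1) (a : ℕ → ℂ)
    (h : ∑ j ∈ S, a j • ((MvPolynomial.X 0 + MvPolynomial.C (t j) * MvPolynomial.X 1 : MvPolynomial (Fin 3) ℂ) ^ d) = 0) :
    ∀ j ∈ S, a j = 0 := by
  -- power sums vanish
  have hpow : ∀ r ≤ d, ∑ j ∈ S, a j * t j ^ r = 0 := by
    intro r hr
    have hK : d - (d - r) = r := by omega
    have h0 := congrArg (MvPolynomial.coeff (Finsupp.single 0 (d - r) + Finsupp.single 1 r)) h
    rw [MvPolynomial.coeff_sum] at h0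
    simp only [MvPolynomial.coeff_smul, MvPolynomial.coeff_zero] at h0
    have h1 : ∀ j ∈ S, a j • MvPolynomial.coeff (Finsupp.single 0 (d - r) + Finsupp.single 1 r)
        ((MvPolynomial.X 0 + MvPolynomial.C (t j) * MvPolynomial.X 1 : MvPolynomial (Fin 3) ℂ) ^ d)
        = (d.choose (d - r) : ℂ) * (a j * t j ^ r) := by
      intro j hj
      rw [show (Finsupp.single (0 : Fin 3) (d - r) + Finsupp.single 1 r)
          = (Finsupp.single 0 (d - r) + Finsupp.single 1 (d - (d - r))) by rw [hK]]
      rw [coeff_binpow d (d - r) (by omega) (t j), hK]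
      simp [smul_eq_mul]; ring
    rw [Finset.sum_congr rfl h1, ← Finset.mul_sum] at h0
    rcases mul_eq_zero.1 h0 with hc | hc
    · exact absurd hc (by exact_mod_cast (Nat.choose_pos (show d - r ≤ d by omega)).ne')
    · exact hc
  -- Lagrange-style argument
  intro j0 hj0
  set P : Polynomial ℂ := ∏ j ∈ S.erase j0, (Polynomial.X - Polynomial.C (t j)) with hP
  have hdeg : P.natDegree ≤ d := by
    rw [hP, Polynomial.natDegree_prod _ _ (fun j _ => Polynomial.X_sub_C_ne_zero (t j))]
    simp only [Polynomial.natDegree_X_sub_C]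
    have : (S.erase j0).card ≤ d := by
      have := Finset.card_erase_of_mem hj0
      omega
    simpa using this
  have hkey : ∑ j ∈ S, a j * P.eval (t j) = 0 := by
    have : ∀ j ∈ S, a j * P.eval (t j) = ∑ r ∈ range (d+1), P.coeff r * (a j * t j ^ r) := by
      intro j hj
      rw [Polynomial.eval_eq_sum_range' (lt_of_le_of_lt hdeg (Nat.lt_succ_self d))]
      rw [Finset.mul_sum]
      exact Finset.sum_congr rfl fun r _ => by ring
    rw [Finset.sum_congr rfl this, Finset.sum_comm]
    apply Finset.sum_eq_zero
    intro r hr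
    rw [← Finset.mul_sum, hpow r (Nat.lt_succ_iff.mp (mem_range.1 hr)), mul_zero]
  have hzero : ∀ j ∈ S, j ≠ j0 → a j * P.eval (t j) = 0 := by
    intro j hj hne
    have : P.eval (t j) = 0 := by
      rw [hP, Polynomial.eval_prod]
      apply Finset.prod_eq_zero (Finset.mem_erase.2 ⟨hne, hj⟩)
      simp
    rw [this, mul_zero]
  rw [Finset.sum_eq_single j0 hzero (fun h => absurd hj0 h)] at hkey
  have hPne : P.eval (t j0) ≠ 0 := by
    rw [hP, Polynomial.eval_prod]
    apply Finset.prod_ne_zero_iff.2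
    intro j hj
    rw [Finset.mem_erase] at hj
    simp only [Polynomial.eval_sub, Polynomial.eval_X, Polynomial.eval_C, sub_ne_zero]
    exact fun he => hj.1 (hinj hj.2 hj0 he.symm)
  rcases mul_eq_zero.1 hkey with hc | hc
  · exact hc
  · exact absurd hc hPne


lemma circuit (d : ℕ) (ω : ℂ) (hω : IsPrimitiveRoot ω (d + 2)) :
    ∑ j ∈ range (d + 2), ω ^ j •
      ((MvPolynomial.X 0 + MvPolynomial.C (ω ^ j) * MvPolynomial.X 1 : MvPolynomial (Fin 3) ℂ) ^ d) = 0 := by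
  have hexp : ∀ j, ω ^ j •
      ((MvPolynomial.X 0 + MvPolynomial.C (ω ^ j) * MvPolynomial.X 1 : MvPolynomial (Fin 3) ℂ) ^ d)
      = ∑ k ∈ range (d + 1), ((ω ^ (d - k + 1)) ^ j) •
          ((MvPolynomial.X 0 : MvPolynomial (Fin 3) ℂ) ^ k * MvPolynomial.X 1 ^ (d - k) * (d.choose k : MvPolynomial (Fin 3) ℂ)) := by
    intro j
    rw [add_pow, Finset.smul_sum]
    apply Finset.sum_congr rfl
    intro k hk
    rw [mul_pow, ← C_pow, ← pow_mul]
    rw [show (MvPolynomial.X 0 : MvPolynomial (Fin 3) ℂ) ^ k * (MvPolynomial.C (ω ^ (j * (d - k))) * MvPolynomial.X 1 ^ (d - k)) * (d.choose k : MvPolynomial (Fin 3) ℂ)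
        = (ω ^ (j * (d - k))) • ((MvPolynomial.X 0 : MvPolynomial (Fin 3) ℂ) ^ k * MvPolynomial.X 1 ^ (d - k) * (d.choose k : MvPolynomial (Fin 3) ℂ)) by
      rw [smul_eq_C_mul]; ring]
    rw [smul_smul, ← pow_mul, ← pow_add]
    congr 2
    ring
  rw [Finset.sum_congr rfl (fun j _ => hexp j), Finset.sum_comm]
  apply Finset.sum_eq_zero
  intro k hk
  rw [← Finset.sum_smul]
  have hne : ω ^ (d - k + 1) ≠ 1 := by
    apply hω.pow_ne_one_of_pos_of_lt
    · omega
    · have := Finset.mem_range.1 hk; omega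
  have hone : (ω ^ (d - k + 1)) ^ (d + 2) = 1 := by
    rw [← pow_mul, mul_comm, pow_mul, hω.pow_eq_one, one_pow]
  rw [geom_sum_eq hne, hone, sub_self, zero_div, zero_smul]

/-- Vandermonde inversion: members of a polynomial family's coefficient list lie in
the span of the family's values. -/


lemma span_coeffs {M : Type*} [AddCommGroup M] [Module ℂ M] {n : ℕ} (g : Fin n → M)
    (f : ℂ → M) (hf : ∀ a : ℂ, f a = ∑ i : Fin n, a ^ (i : ℕ) • g i) (i : Fin n) :
    g i ∈ Submodule.span ℂ (Set.range f) := by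
  set v : Fin n → ℂ := fun k => (k : ℕ) with hv
  have hvinj : Function.Injective v := by
    intro k l h
    exact Fin.ext (Nat.cast_injective h)
  set V := Matrix.vandermonde v with hV
  have hdet : IsUnit V.det := by
    rw [isUnit_iff_ne_zero]
    exact Matrix.det_vandermonde_ne_zero_iff.2 hvinj
  have hBV : V⁻¹ * V = 1 := Matrix.nonsing_inv_mul V hdet
  have key : g i = ∑ k, V⁻¹ i k • f (v k) := by
    have : ∀ k, V⁻¹ i k • f (v k) = ∑ j, (V⁻¹ i k * V k j) • g j := by
      intro k
      rw [hf, Finset.smul_sum]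
      apply Finset.sum_congr rfl
      intro j _
      rw [smul_smul]
      rfl
    rw [Finset.sum_congr rfl (fun k _ => this k), Finset.sum_comm]
    have h1 : ∀ j : Fin n, ∑ k, (V⁻¹ i k * V k j) • g j = ((1 : Matrix (Fin n) (Fin n) ℂ) i j) • g j := by
      intro j
      rw [← Finset.sum_smul, ← hBV]
      rfl
    rw [Finset.sum_congr rfl (fun j _ => h1 j)]
    simp [Matrix.one_apply]
  rw [key]
  exact Submodule.sum_mem _ fun k _ =>
    Submodule.smul_mem _ _ (Submodule.subset_span ⟨v k, rfl⟩)


lemma monomial_mem (d i j : ℕ) (hij : i + j ≤ d) (Spn : Submodule ℂ (MvPolynomial (Fin 3) ℂ))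
    (h : ∀ a b : ℂ, ((MvPolynomial.X 0 + MvPolynomial.C a * MvPolynomial.X 1
      + MvPolynomial.C b * MvPolynomial.X 2 : MvPolynomial (Fin 3) ℂ)) ^ d ∈ Spn) :
    (MvPolynomial.X 0 ^ (d - i - j) * MvPolynomial.X 1 ^ i * MvPolynomial.X 2 ^ j :
      MvPolynomial (Fin 3) ℂ) ∈ Spn := by
  -- Stage 1 : coefficients of `a`.
  have stage1 : ∀ b : ℂ,
      (MvPolynomial.X 1 ^ i * (MvPolynomial.X 0 + MvPolynomial.C b * MvPolynomial.X 2) ^ (d - i)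
        * (d.choose i : MvPolynomial (Fin 3) ℂ)) ∈ Spn := by
    intro b
    set g : Fin (d+1) → MvPolynomial (Fin 3) ℂ := fun k =>
      MvPolynomial.X 1 ^ (k : ℕ) * (MvPolynomial.X 0 + MvPolynomial.C b * MvPolynomial.X 2) ^ (d - (k : ℕ))
        * (d.choose (k : ℕ) : MvPolynomial (Fin 3) ℂ) with hg
    set f : ℂ → MvPolynomial (Fin 3) ℂ := fun a =>
      (MvPolynomial.X 0 + MvPolynomial.C a * MvPolynomial.X 1
        + MvPolynomial.C b * MvPolynomial.X 2) ^ d with hf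
    have hexp : ∀ a : ℂ, f a = ∑ k : Fin (d+1), a ^ (k : ℕ) • g k := by
      intro a
      have h1 : f a = (MvPolynomial.C a * MvPolynomial.X 1
          + (MvPolynomial.X 0 + MvPolynomial.C b * MvPolynomial.X 2)) ^ d := by
        rw [hf]; ring_nf
      rw [h1, add_pow]
      rw [← Fin.sum_univ_eq_sum_range (fun k =>
        (MvPolynomial.C a * MvPolynomial.X 1) ^ k
          * (MvPolynomial.X 0 + MvPolynomial.C b * MvPolynomial.X 2) ^ (d - k)
          * (d.choose k : MvPolynomial (Fin 3) ℂ)) (d+1)]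
      apply Finset.sum_congr rfl
      intro k _
      rw [hg, mul_pow, ← C_pow, smul_eq_C_mul]
      ring
    have hi : i < d + 1 := by omega
    have := span_coeffs g f hexp ⟨i, hi⟩
    have hle : Submodule.span ℂ (Set.range f) ≤ Spn := by
      rw [Submodule.span_le]
      rintro x ⟨a, rfl⟩
      exact h a b
    exact hle (by simpa [hg] using this)
  -- Stage 2 : coefficients of `b`.
  set G : ℂ → MvPolynomial (Fin 3) ℂ := fun b =>
    MvPolynomial.X 1 ^ i * (MvPolynomial.X 0 + MvPolynomial.C b * MvPolynomial.X 2) ^ (d - i)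
      * (d.choose i : MvPolynomial (Fin 3) ℂ) with hG
  set h2 : Fin (d - i + 1) → MvPolynomial (Fin 3) ℂ := fun k =>
    MvPolynomial.X 1 ^ i * (MvPolynomial.X 2 ^ (k : ℕ) * MvPolynomial.X 0 ^ (d - i - (k : ℕ))
      * ((d - i).choose (k : ℕ) : MvPolynomial (Fin 3) ℂ))
      * (d.choose i : MvPolynomial (Fin 3) ℂ) with hh2
  have hexp2 : ∀ b : ℂ, G b = ∑ k : Fin (d - i + 1), b ^ (k : ℕ) • h2 k := by
    intro b
    have h1 : (MvPolynomial.X 0 + MvPolynomial.C b * MvPolynomial.X 2 : MvPolynomial (Fin 3) ℂ) ^ (d - i)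
        = (MvPolynomial.C b * MvPolynomial.X 2
          + MvPolynomial.X 0 : MvPolynomial (Fin 3) ℂ) ^ (d - i) := by ring_nf
    simp only [hG]
    rw [h1, add_pow]
    rw [← Fin.sum_univ_eq_sum_range (fun k =>
      (MvPolynomial.C b * MvPolynomial.X 2) ^ k * MvPolynomial.X 0 ^ (d - i - k)
        * ((d - i).choose k : MvPolynomial (Fin 3) ℂ)) (d - i + 1)]
    rw [Finset.mul_sum, Finset.sum_mul]
    apply Finset.sum_congr rfl
    intro k _
    rw [hh2, mul_pow, ← C_pow, smul_eq_C_mul]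
    ring
  have hj : j < d - i + 1 := by omega
  have hmem := span_coeffs h2 G hexp2 ⟨j, hj⟩
  have hle : Submodule.span ℂ (Set.range G) ≤ Spn := by
    rw [Submodule.span_le]
    rintro x ⟨b, rfl⟩
    exact stage1 b
  have hmem2 : h2 ⟨j, hj⟩ ∈ Spn := hle hmem
  -- Final scaling.
  set c : ℂ := ((d.choose i : ℕ) : ℂ) * (((d - i).choose j : ℕ) : ℂ) with hc
  have hc0 : c ≠ 0 := by
    apply mul_ne_zero
    · exact_mod_cast (Nat.choose_pos (show i ≤ d by omega)).ne'
    · exact_mod_cast (Nat.choose_pos (show j ≤ d - i by omega)).ne'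
  have hkey : c • (MvPolynomial.X 0 ^ (d - i - j) * MvPolynomial.X 1 ^ i * MvPolynomial.X 2 ^ j :
      MvPolynomial (Fin 3) ℂ) = h2 ⟨j, hj⟩ := by
    simp only [hh2, hc]
    rw [smul_eq_C_mul, map_mul, map_natCast, map_natCast]
    ring
  have := Submodule.smul_mem Spn c⁻¹ hmem2
  rw [← hkey, smul_smul, inv_mul_cancel₀ hc0, one_smul] at this
  exact this


lemma li_grid (m : ℕ) :
    LinearIndependent ℂ (fun p : Fin (m+1) × Fin (m+1) =>
      (MvPolynomial.X 0 ^ (2*m - (p.1 : ℕ) - (p.2 : ℕ)) * MvPolynomial.X 1 ^ (p.1 : ℕ)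
        * MvPolynomial.X 2 ^ (p.2 : ℕ) : MvPolynomial (Fin 3) ℂ)) := by
  set ν : Fin (m+1) × Fin (m+1) → (Fin 3 →₀ ℕ) := fun p =>
    Finsupp.single 0 (2*m - (p.1 : ℕ) - (p.2 : ℕ)) + Finsupp.single 1 (p.1 : ℕ)
      + Finsupp.single 2 (p.2 : ℕ) with hν
  have hνinj : Function.Injective ν := by
    intro p q h
    have h1 := DFunLike.congr_fun h (1 : Fin 3)
    have h2 := DFunLike.congr_fun h (2 : Fin 3)
    simp only [hν, Finsupp.add_apply, Finsupp.single_apply] at h1 h2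
    norm_num [show ((0:Fin 3) = 1) = False by decide, show ((0:Fin 3) = 2) = False by decide,
      show ((1:Fin 3) = 2) = False by decide, show ((2:Fin 3) = 1) = False by decide] at h1 h2
    exact Prod.ext (Fin.ext h1) (Fin.ext h2)
  have : (fun p : Fin (m+1) × Fin (m+1) =>
      (MvPolynomial.X 0 ^ (2*m - (p.1 : ℕ) - (p.2 : ℕ)) * MvPolynomial.X 1 ^ (p.1 : ℕ)
        * MvPolynomial.X 2 ^ (p.2 : ℕ) : MvPolynomial (Fin 3) ℂ))
      = (MvPolynomial.basisMonomials (Fin 3) ℂ) ∘ ν := by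
    funext p
    rw [Function.comp_apply, coe_basisMonomials, mono3]
  rw [this]
  exact (MvPolynomial.basisMonomials (Fin 3) ℂ).linearIndependent.comp ν hνinj


/-- The `j`-th binary power. -/
def wj (m : ℕ) (ω : ℂ) (j : ℕ) : MvPolynomial (Fin 3) ℂ :=
  (X 0 + C (ω ^ j) * X 1) ^ (2 * m)

lemma exists_Evec (m : ℕ) (ω : ℂ) (k : ℕ) (hk : 2*m+2+k ≤ (m+1)^2) :
    ∃ E : Finset (MvPolynomial (Fin 3) ℂ), E.card = k ∧
      (↑E ⊆ Set.range (vero 2 (2*m))) ∧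
      ∀ c : MvPolynomial (Fin 3) ℂ → ℂ,
        (∑ v ∈ E, c v • v) ∈ Submodule.span ℂ
          (((Finset.range (2*m+2)).image (wj m ω) : Finset (MvPolynomial (Fin 3) ℂ)) : Set (MvPolynomial (Fin 3) ℂ)) →
        ∀ v ∈ E, c v = 0 := by
  classical
  induction k with
  | zero => exact ⟨∅, by simp⟩
  | succ k ih =>
    obtain ⟨E, hcard, hsub, hprop⟩ := ih (by omega)
    set WF : Finset (MvPolynomial (Fin 3) ℂ) := (Finset.range (2*m+2)).image (wj m ω) with hWF
    set F : Finset (MvPolynomial (Fin 3) ℂ) := WF ∪ E with hF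
    set Spn := Submodule.span ℂ (F : Set (MvPolynomial (Fin 3) ℂ)) with hSpn
    have hex : ∃ u ∈ Set.range (vero 2 (2*m)), u ∉ Spn := by
      by_contra hall
      push_neg at hall
      have hpow : ∀ a b : ℂ, ((MvPolynomial.X 0 + MvPolynomial.C a * MvPolynomial.X 1
          + MvPolynomial.C b * MvPolynomial.X 2 : MvPolynomial (Fin 3) ℂ)) ^ (2*m) ∈ Spn := by
        intro a b
        obtain ⟨c, hc0, hc⟩ := vero_mk (2*m) ![1, a, b] (abc_nonzero a b)
        rw [linForm_abc] at hc
        have h1 : vero 2 (2*m) (Projectivization.mk ℂ ![1, a, b] (abc_nonzero a b)) ∈ Spn :=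
          hall _ ⟨_, rfl⟩
        have h2 := Submodule.smul_mem Spn c⁻¹ h1
        rw [hc, smul_smul, inv_mul_cancel₀ hc0, one_smul] at h2
        exact h2
      have hmono : ∀ p : Fin (m+1) × Fin (m+1),
          (MvPolynomial.X 0 ^ (2*m - (p.1 : ℕ) - (p.2 : ℕ)) * MvPolynomial.X 1 ^ (p.1 : ℕ)
            * MvPolynomial.X 2 ^ (p.2 : ℕ) : MvPolynomial (Fin 3) ℂ) ∈ Spn := by
        intro p
        exact monomial_mem (2*m) p.1 p.2 (by omega) Spn hpow
      have hfam : LinearIndependent ℂ (fun p : Fin (m+1) × Fin (m+1) =>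
          (⟨_, hmono p⟩ : Spn)) := by
        apply LinearIndependent.of_comp Spn.subtype
        exact li_grid m
      have hfin : FiniteDimensional ℂ Spn := FiniteDimensional.span_finset ℂ F
      have hcardle := hfam.fintype_card_le_finrank
      have hrank : Module.finrank ℂ Spn ≤ F.card := by
        have := finrank_span_le_card (R := ℂ) (F : Set (MvPolynomial (Fin 3) ℂ))
        simpa using this
      have hWFcard : WF.card ≤ 2*m+2 := by
        rw [hWF]
        exact le_trans Finset.card_image_le (by simp)
      have hFcard : F.card ≤ 2*m+2+k := by
        have h1 : F.card ≤ WF.card + E.card := Finset.card_union_le _ _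
        omega
      have hbig : Fintype.card (Fin (m+1) × Fin (m+1)) = (m+1)^2 := by
        simp [sq]
      omega
    obtain ⟨u, hurange, hu⟩ := hex
    have huE : u ∉ E := fun h =>
      hu (Submodule.subset_span (by simp [hF, h]))
    refine ⟨insert u E, ?_, ?_, ?_⟩
    · rw [Finset.card_insert_of_notMem huE, hcard]
    · rw [Finset.coe_insert]
      exact Set.insert_subset hurange hsub
    · intro c hc
      rw [Finset.sum_insert huE] at hc
      have hWWle : Submodule.span ℂ (WF : Set (MvPolynomial (Fin 3) ℂ)) ≤ Spn :=
        Submodule.span_mono (by simp [hF])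
      have hrest : (∑ v ∈ E, c v • v) ∈ Spn := by
        apply Submodule.sum_mem
        intro v hv
        exact Submodule.smul_mem _ _ (Submodule.subset_span (by simp [hF, hv]))
      have hcu : c u = 0 := by
        by_contra hcu
        apply hu
        have h1 : (c u • u + ∑ v ∈ E, c v • v) ∈ Spn := hWWle hc
        have h2 : c u • u ∈ Spn := by
          have := Submodule.sub_mem Spn h1 hrest
          simpa using this
        have h3 := Submodule.smul_mem Spn (c u)⁻¹ h2
        rwa [smul_smul, inv_mul_cancel₀ hcu, one_smul] at h3
      rw [hcu, zero_smul, zero_add] at hc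
      intro v hv
      rcases Finset.mem_insert.1 hv with rfl | hv
      · exact hcu
      · exact hprop c hc v hv


end Aux2

lemma two_choose (n : ℕ) : 2 * Nat.choose (n+2) 2 = (n+2)*(n+1) := by
  induction n with
  | zero => rfl
  | succ n ih =>
    show 2 * Nat.choose (n+3) 2 = (n+3)*(n+2)
    have h1 : Nat.choose (n+3) 2 = Nat.choose (n+2) 1 + Nat.choose (n+2) 2 :=
      Nat.choose_succ_succ (n+2) 1
    have h2 : Nat.choose (n+2) 1 = n+2 := Nat.choose_one_right _
    have h3 : (n+3)*(n+2) = (n+2)*(n+1) + 2*(n+2) := by ring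
    omega

lemma nrc (d : ℕ) (A : Finset (Proj 2)) (g : Proj 2 → ℂ)
    (hg : ∀ P ∈ A, g P ≠ 0)
    (hli : ∀ c : Proj 2 → ℂ, ∑ P ∈ A, c P • vero 2 d P = 0 → ∀ P ∈ A, c P = 0) :
    NRComputes 2 d A (∑ P ∈ A, g P • vero 2 d P) := by
  classical
  constructor
  · apply Submodule.sum_mem
    intro P hP
    exact Submodule.smul_mem _ _ (Submodule.subset_span ⟨P, hP, rfl⟩)
  · intro A' hA' hC
    -- injectivity of vero on A
    have hinj : ∀ P ∈ A, ∀ Q ∈ A, vero 2 d P = vero 2 d Q → P = Q := by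
      intro P hP Q hQ hPQ
      by_contra hne
      have hsum : ∑ X ∈ A, (if X = P then (1:ℂ) else if X = Q then -1 else 0) • vero 2 d X = 0 := by
        have hterm : ∀ X ∈ A, (if X = P then (1:ℂ) else if X = Q then -1 else 0) • vero 2 d X
            = (if X = P then vero 2 d X else 0) + (if X = Q then -(vero 2 d X) else 0) := by
          intro X _
          by_cases h1 : X = P
          · subst h1
            rw [if_pos rfl, if_pos rfl, if_neg (by exact hne), one_smul, add_zero]
          · rw [if_neg h1, if_neg h1]
            by_cases h2 : X = Q
            · subst h2
              rw [if_pos rfl, if_pos rfl, neg_one_smul, zero_add]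
            · rw [if_neg h2, if_neg h2, zero_smul, add_zero]
        rw [Finset.sum_congr rfl hterm, Finset.sum_add_distrib,
          Finset.sum_ite_eq' A P (fun X => vero 2 d X),
          Finset.sum_ite_eq' A Q (fun X => -(vero 2 d X)),
          if_pos hP, if_pos hQ, hPQ, add_neg_cancel]
      have := hli _ hsum P hP
      rw [if_pos rfl] at this
      exact one_ne_zero this
    -- extract a combination over A'
    unfold Computes at hC
    rw [show vero 2 d '' (A' : Set (Proj 2)) = ((A'.image (vero 2 d) : Finset _) : Set _) by
      rw [Finset.coe_image]] at hC
    obtain ⟨f, -, hf⟩ := Submodule.mem_span_finset.1 hC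
    have hinj' : ∀ x ∈ A', ∀ y ∈ A', vero 2 d x = vero 2 d y → x = y :=
      fun x hx y hy => hinj x (hA'.subset hx) y (hA'.subset hy)
    rw [Finset.sum_image hinj'] at hf
    set c : Proj 2 → ℂ := fun P => (if P ∈ A' then f (vero 2 d P) else 0) - g P with hc
    have hzero : ∑ P ∈ A, c P • vero 2 d P = 0 := by
      have : ∀ P ∈ A, c P • vero 2 d P
          = (if P ∈ A' then f (vero 2 d P) else 0) • vero 2 d P - g P • vero 2 d P := by
        intro P _
        rw [hc, sub_smul]
      rw [Finset.sum_congr rfl this, Finset.sum_sub_distrib]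
      have hA'sum : ∑ P ∈ A, (if P ∈ A' then f (vero 2 d P) else 0) • vero 2 d P
          = ∑ P ∈ A', f (vero 2 d P) • vero 2 d P := by
        rw [← Finset.sum_subset hA'.subset]
        · exact Finset.sum_congr rfl fun P hP => by rw [if_pos hP]
        · intro P _ hP
          rw [if_neg hP, zero_smul]
      rw [hA'sum, hf, sub_self]
    obtain ⟨P0, hP0A, hP0A'⟩ := Finset.exists_of_ssubset hA'
    have := hli c hzero P0 hP0A
    rw [hc] at this
    simp only [if_neg hP0A', zero_sub, neg_eq_zero] at this
    exact hg P0 hP0A this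

theorem stmt15' (m : ℕ) (hm : 5 ≤ m) :
    ∃ (T : MvPolynomial (Fin 3) ℂ) (A B : Finset (Proj 2)),
      T ≠ 0 ∧ T.IsHomogeneous (2 * m) ∧
      A.card = Nat.choose (m + 2) 2 + 1 ∧ B.card = Nat.choose (m + 2) 2 - 1 ∧
      NRComputes 2 (2 * m) A T ∧ NRComputes 2 (2 * m) B T := by
  classical
  -- the primitive root
  set n : ℕ := 2 * m + 2 with hn
  set ω : ℂ := Complex.exp (2 * Real.pi * Complex.I / n) with hωdef
  have hω : IsPrimitiveRoot ω n := Complex.isPrimitiveRoot_exp n (by omega)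
  have hω0 : ω ≠ 0 := by
    intro h
    have h1 := hω.pow_eq_one
    rw [h] at h1
    rw [zero_pow (by omega)] at h1
    exact zero_ne_one h1
  -- the line points
  set pt : ℕ → Proj 2 := fun j => Projectivization.mk ℂ ![1, ω ^ j, 0] (bin_nonzero _) with hpt
  have hγex : ∀ j : ℕ, ∃ c : ℂ, c ≠ 0 ∧ vero 2 (2*m) (pt j) = c • wj m ω j := by
    intro j
    obtain ⟨c, h0, hc⟩ := vero_mk (2*m) ![1, ω ^ j, 0] (bin_nonzero _)
    rw [linForm_bin] at hc
    exact ⟨c, h0, hc⟩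
  choose γ hγ0 hγ using hγex
  have hptinj : ∀ j1 < n, ∀ j2 < n, pt j1 = pt j2 → j1 = j2 := by
    intro j1 h1 j2 h2 h
    simp only [hpt] at h
    rw [Projectivization.mk_eq_mk_iff] at h
    obtain ⟨a, ha⟩ := h
    have e0 := congrFun ha 0
    have e1 := congrFun ha 1
    simp only [Units.smul_def, Pi.smul_apply, smul_eq_mul, Matrix.cons_val_zero,
      Matrix.cons_val_one, Matrix.head_cons, mul_one] at e0 e1
    rw [e0, one_mul] at e1
    exact (hω.pow_inj h2 h1 e1).symm
  -- arithmetic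
  set N : ℕ := Nat.choose (m + 2) 2 with hN
  set q : ℕ := m * m with hq
  have hq2 : 2 * N = q + 3 * m + 2 := by
    rw [hN, two_choose m, hq]; ring
  have hsq : 3 * m ≤ q := by
    rw [hq]; calc 3 * m ≤ m * m := Nat.mul_le_mul_right m (by omega)
    _ = m * m := rfl
  set e : ℕ := N - 1 - m with he
  have hsq2 : (m+1)^2 = q + 2*m + 1 := by rw [hq]; ring
  have hk : 2*m+2+e ≤ (m+1)^2 := by omega
  -- the extra points
  obtain ⟨Evec, hEcard, hEsub, hEprop⟩ := exists_Evec m ω e hk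
  have hquot : ∀ v : MvPolynomial (Fin 3) ℂ, ∃ P : Proj 2, v ∈ Evec → vero 2 (2*m) P = v := by
    intro v
    by_cases hv : v ∈ Evec
    · obtain ⟨P, hP⟩ := hEsub hv
      exact ⟨P, fun _ => hP⟩
    · exact ⟨pt 0, fun h => absurd h hv⟩
  choose ch hch using hquot
  set Epts : Finset (Proj 2) := Evec.image ch with hEpts
  have hchinj : ∀ v1 ∈ Evec, ∀ v2 ∈ Evec, ch v1 = ch v2 → v1 = v2 := by
    intro v1 h1 v2 h2 h
    rw [← hch v1 h1, ← hch v2 h2, h]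
  have hEptscard : Epts.card = e := by
    rw [hEpts, Finset.card_image_of_injOn hchinj, hEcard]
  -- w's and the span WW
  set WW := Submodule.span ℂ
      (((Finset.range n).image (wj m ω) : Finset (MvPolynomial (Fin 3) ℂ)) :
        Set (MvPolynomial (Fin 3) ℂ)) with hWW
  have hwjWW : ∀ j < n, wj m ω j ∈ WW :=
    fun j hj => Submodule.subset_span (Finset.mem_coe.2 (Finset.mem_image.2
      ⟨j, Finset.mem_range.2 hj, rfl⟩))
  have hEWW : ∀ v ∈ Evec, v ∉ WW := by
    intro v hv hvWW
    have hsum : ∑ x ∈ Evec, (if x = v then (1:ℂ) else 0) • x = v := by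
      have hcong : ∀ x ∈ Evec, (if x = v then (1:ℂ) else 0) • x = (if x = v then x else 0) := by
        intro x _
        split_ifs with h
        · rw [h, one_smul]
        · rw [zero_smul]
      rw [Finset.sum_congr rfl hcong, Finset.sum_ite_eq' Evec v (fun x => x), if_pos hv]
    have := hEprop (fun x => if x = v then 1 else 0) (by rw [hsum]; exact hvWW) v hv
    simp at this
  have hptE : ∀ j < n, pt j ∉ Epts := by
    intro j hj hmem
    obtain ⟨v, hv, hveq⟩ := Finset.mem_image.1 hmem
    have h1 : v = vero 2 (2*m) (pt j) := by rw [← hch v hv, hveq]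
    have h2 : v ∈ WW := by
      rw [h1, hγ j]
      exact Submodule.smul_mem _ _ (hwjWW j hj)
    exact hEWW v hv h2
  have hdisj : ∀ S : Finset ℕ, (∀ j ∈ S, j < n) → Disjoint (S.image pt) Epts := by
    intro S hS
    rw [Finset.disjoint_left]
    rintro P hP hPE
    obtain ⟨j, hj, rfl⟩ := Finset.mem_image.1 hP
    exact hptE j (hS j hj) hPE
  -- sum splitting
  have hsplit : ∀ (S : Finset ℕ), (∀ j ∈ S, j < n) → ∀ (c : Proj 2 → ℂ),
      ∑ P ∈ (S.image pt) ∪ Epts, c P • vero 2 (2*m) P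
      = (∑ j ∈ S, (c (pt j) * γ j) • wj m ω j) + (∑ v ∈ Evec, c (ch v) • v) := by
    intro S hS c
    rw [Finset.sum_union (hdisj S hS)]
    congr 1
    · rw [Finset.sum_image (fun x hx y hy h => hptinj x (hS x hx) y (hS y hy) h)]
      exact Finset.sum_congr rfl fun j _ => by rw [hγ j, smul_smul]
    · rw [hEpts, Finset.sum_image hchinj]
      exact Finset.sum_congr rfl fun v hv => by rw [hch v hv]
  -- linear independence of the decompositions
  have hliS : ∀ (S : Finset ℕ), (∀ j ∈ S, j < n) → S.card ≤ 2*m+1 → ∀ c : Proj 2 → ℂ,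
      (∑ P ∈ (S.image pt) ∪ Epts, c P • vero 2 (2*m) P) = 0 →
        ∀ P ∈ (S.image pt) ∪ Epts, c P = 0 := by
    intro S hSsub hScard c h0
    rw [hsplit S hSsub c] at h0
    have h1 : (∑ v ∈ Evec, c (ch v) • v) ∈ WW := by
      have heq : ∑ v ∈ Evec, c (ch v) • v
          = -(∑ j ∈ S, (c (pt j) * γ j) • wj m ω j) :=
        eq_neg_of_add_eq_zero_right h0
      rw [heq]
      exact Submodule.neg_mem _ (Submodule.sum_mem _ fun j hj =>
        Submodule.smul_mem _ _ (hwjWW j (hSsub j hj)))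
    have hEzero : ∀ v ∈ Evec, c (ch v) = 0 := hEprop _ h1
    have h2 : ∑ j ∈ S, (c (pt j) * γ j) • wj m ω j = 0 := by
      have hz : ∑ v ∈ Evec, c (ch v) • v = 0 :=
        Finset.sum_eq_zero fun v hv => by rw [hEzero v hv, zero_smul]
      rw [hz, add_zero] at h0
      exact h0
    have h3 : ∑ j ∈ S, (c (pt j) * γ j) •
        ((MvPolynomial.X 0 + MvPolynomial.C (ω ^ j) * MvPolynomial.X 1 :
          MvPolynomial (Fin 3) ℂ) ^ (2*m)) = 0 := by
      simpa only [wj] using h2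
    have hSzero := li_binpow (2*m) S (fun j => ω ^ j)
      (fun x hx y hy h => hω.pow_inj (hSsub x (Finset.mem_coe.1 hx))
        (hSsub y (Finset.mem_coe.1 hy)) h)
      (by omega) (fun j => c (pt j) * γ j) h3
    intro P hP
    rcases Finset.mem_union.1 hP with hP1 | hP2
    · obtain ⟨j, hj, rfl⟩ := Finset.mem_image.1 hP1
      have := hSzero j hj
      rcases mul_eq_zero.1 this with h | h
      · exact h
      · exact absurd h (hγ0 j)
    · obtain ⟨v, hv, rfl⟩ := Finset.mem_image.1 hP2
      exact hEzero v hv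
  -- the coefficient functions
  set gA : Proj 2 → ℂ := fun P => if P ∈ Epts then 1 else
    (if h : ∃ j, j < n ∧ pt j = P then ω ^ h.choose * (γ h.choose)⁻¹ else 0) with hgA
  set gB : Proj 2 → ℂ := fun P => if P ∈ Epts then 1 else
    (if h : ∃ j, j < n ∧ pt j = P then -(ω ^ h.choose) * (γ h.choose)⁻¹ else 0) with hgB
  have hgAval : ∀ j < n, gA (pt j) = ω ^ j * (γ j)⁻¹ := by
    intro j hj
    have hex : ∃ j', j' < n ∧ pt j' = pt j := ⟨j, hj, rfl⟩
    simp only [hgA, if_neg (hptE j hj), dif_pos hex]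
    obtain ⟨h1, h2⟩ := hex.choose_spec
    rw [hptinj _ h1 _ hj h2]
  have hgBval : ∀ j < n, gB (pt j) = -(ω ^ j) * (γ j)⁻¹ := by
    intro j hj
    have hex : ∃ j', j' < n ∧ pt j' = pt j := ⟨j, hj, rfl⟩
    simp only [hgB, if_neg (hptE j hj), dif_pos hex]
    obtain ⟨h1, h2⟩ := hex.choose_spec
    rw [hptinj _ h1 _ hj h2]
  have hgEval : ∀ v ∈ Evec, gA (ch v) = 1 ∧ gB (ch v) = 1 := by
    intro v hv
    have : ch v ∈ Epts := Finset.mem_image_of_mem ch hv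
    constructor
    · simp only [hgA, if_pos this]
    · simp only [hgB, if_pos this]
  -- the sets
  set A : Finset (Proj 2) := ((Finset.range (m+2)).image pt) ∪ Epts with hA
  set B : Finset (Proj 2) := ((Finset.Ico (m+2) n).image pt) ∪ Epts with hB
  have hrange_mem : ∀ j ∈ Finset.range (m+2), j < n := fun j hj => by
    have := Finset.mem_range.1 hj; omega
  have hIco_mem : ∀ j ∈ Finset.Ico (m+2) n, j < n := fun j hj => by
    have := Finset.mem_Ico.1 hj; omega
  -- the form T and its two representations
  set T : MvPolynomial (Fin 3) ℂ := ∑ P ∈ A, gA P • vero 2 (2*m) P with hT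
  have hTA : T = (∑ j ∈ Finset.range (m+2), (ω ^ j) • wj m ω j) + (∑ v ∈ Evec, v) := by
    rw [hT, hA, hsplit _ hrange_mem gA]
    congr 1
    · exact Finset.sum_congr rfl fun j hj => by
        rw [hgAval j (hrange_mem j hj), inv_mul_cancel_right₀ (hγ0 j)]
    · exact Finset.sum_congr rfl fun v hv => by rw [(hgEval v hv).1, one_smul]
  have hTB : (∑ P ∈ B, gB P • vero 2 (2*m) P)
      = (∑ j ∈ Finset.Ico (m+2) n, (-(ω ^ j)) • wj m ω j) + (∑ v ∈ Evec, v) := by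
    rw [hB, hsplit _ hIco_mem gB]
    congr 1
    · exact Finset.sum_congr rfl fun j hj => by
        rw [hgBval j (hIco_mem j hj), inv_mul_cancel_right₀ (hγ0 j)]
    · exact Finset.sum_congr rfl fun v hv => by rw [(hgEval v hv).2, one_smul]
  have hcirc : ∑ j ∈ Finset.range n, (ω ^ j) • wj m ω j = 0 := by
    have h := circuit (2*m) ω hω
    rw [hn]
    simpa only [wj] using h
  have hTeq : T = ∑ P ∈ B, gB P • vero 2 (2*m) P := by
    rw [hTA, hTB]
    have hsplitsum : (∑ j ∈ Finset.range (m+2), (ω ^ j) • wj m ω j)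
        + (∑ j ∈ Finset.Ico (m+2) n, (ω ^ j) • wj m ω j) = 0 := by
      rw [Finset.range_eq_Ico, Finset.sum_Ico_consecutive _ (by omega) (by omega),
        ← Finset.range_eq_Ico]
      exact hcirc
    have : ∑ j ∈ Finset.Ico (m+2) n, (-(ω ^ j)) • wj m ω j
        = -(∑ j ∈ Finset.Ico (m+2) n, (ω ^ j) • wj m ω j) := by
      rw [← Finset.sum_neg_distrib]
      exact Finset.sum_congr rfl fun j _ => by rw [neg_smul]
    rw [this]
    have h4 : ∑ j ∈ Finset.range (m+2), (ω ^ j) • wj m ω j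
        = -(∑ j ∈ Finset.Ico (m+2) n, (ω ^ j) • wj m ω j) :=
      eq_neg_of_add_eq_zero_left hsplitsum
    rw [h4]
  -- nonvanishing of coefficients
  have hgA0 : ∀ P ∈ A, gA P ≠ 0 := by
    intro P hP
    rcases Finset.mem_union.1 hP with h1 | h2
    · obtain ⟨j, hj, rfl⟩ := Finset.mem_image.1 h1
      rw [hgAval j (hrange_mem j hj)]
      exact mul_ne_zero (pow_ne_zero j hω0) (inv_ne_zero (hγ0 j))
    · simp only [hgA, if_pos h2]
      exact one_ne_zero
  have hgB0 : ∀ P ∈ B, gB P ≠ 0 := by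
    intro P hP
    rcases Finset.mem_union.1 hP with h1 | h2
    · obtain ⟨j, hj, rfl⟩ := Finset.mem_image.1 h1
      rw [hgBval j (hIco_mem j hj)]
      exact mul_ne_zero (neg_ne_zero.2 (pow_ne_zero j hω0)) (inv_ne_zero (hγ0 j))
    · simp only [hgB, if_pos h2]
      exact one_ne_zero
  -- independence hypotheses
  have hliA := hliS (Finset.range (m+2)) hrange_mem
    (by rw [Finset.card_range]; omega)
  have hliB := hliS (Finset.Ico (m+2) n) hIco_mem
    (by rw [Nat.card_Ico]; omega)
  -- cardinalities
  have hptinjOn : ∀ (S : Finset ℕ), (∀ j ∈ S, j < n) →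
      (S.image pt).card = S.card := by
    intro S hS
    exact Finset.card_image_of_injOn fun x hx y hy h =>
      hptinj x (hS x (Finset.mem_coe.1 hx)) y (hS y (Finset.mem_coe.1 hy)) h
  have hAcard : A.card = N + 1 := by
    rw [hA, Finset.card_union_of_disjoint (hdisj _ hrange_mem),
      hptinjOn _ hrange_mem, Finset.card_range, hEptscard]
    omega
  have hBcard : B.card = N - 1 := by
    rw [hB, Finset.card_union_of_disjoint (hdisj _ hIco_mem),
      hptinjOn _ hIco_mem, Nat.card_Ico, hEptscard]
    omega
  -- nonzero
  have hpt0A : pt 0 ∈ A := Finset.mem_union_left _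
    (Finset.mem_image_of_mem pt (Finset.mem_range.2 (by omega)))
  have hT0 : T ≠ 0 := by
    intro h
    have := hliA gA (by rw [← hT]; exact h) (pt 0) hpt0A
    exact hgA0 (pt 0) hpt0A this
  -- homogeneity
  have hhom : T.IsHomogeneous (2 * m) := by
    rw [← MvPolynomial.mem_homogeneousSubmodule]
    rw [hT]
    exact Submodule.sum_mem _ fun P _ => Submodule.smul_mem _ _
      ((MvPolynomial.mem_homogeneousSubmodule _ _).2 (vero_isHomog (2*m) P))
  exact ⟨T, A, B, hT0, hhom, hAcard, hBcard,
    nrc (2*m) A gA hgA0 (hliA), by rw [hTeq]; exact nrc (2*m) B gB hgB0 hliB⟩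

end AuxAll

/-- Sharpness of the rank criterion, even case: for `d = 2m`, `m ≥ 5`, there is a
nonzero form of degree `d` with a non-redundant decomposition of length
`binom(m+2,2) + 1` and a non-redundant decomposition of length `binom(m+2,2) - 1`. -/
theorem stmt15 (m : ℕ) (hm : 5 ≤ m) :
    ∃ (T : MvPolynomial (Fin 3) ℂ) (A B : Finset (Proj 2)),
      T ≠ 0 ∧ T.IsHomogeneous (2 * m) ∧
      A.card = Nat.choose (m + 2) 2 + 1 ∧ B.card = Nat.choose (m + 2) 2 - 1 ∧
      NRComputes 2 (2 * m) A T ∧ NRComputes 2 (2 * m) B T := by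
  exact stmt15' m hm
end
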